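/- arXiv:2503.16268 — 8 statements merged into one kernel-verified Lean document; each statement's English description precedes it below -/
import Mathlib

section
/- Let (Ξ, F) be a finite measurable space, ν a probability measure on Ξ with ν(ω) > 0 for all ω, η a random variable with law Q, and ν^η a probability measure on Ξ depending measurably on η. Define G(η, ω) = ν^η(ω)/ν(ω). Then for any constants 0 < a < b < 1: Q(‖ν^η − ν‖_TV ≥ b) ≤ (Q ⊗ ν)({(η,ω) : G(η,ω) < 1 − a}) / (b − a). -/
open Finset
open scoped Classical

lemma decoupling_key
    {Ξ : Type*} [Fintype Ξ]
    (ν : Ξ → ℝ) (hν0 : ∀ ω, 0 < ν ω) (hν1 : ∑ ω, ν ω = 1)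
    (μ : Ξ → ℝ) (hμ0 : ∀ ω, 0 ≤ μ ω) (hμ1 : ∑ ω, μ ω = 1)
    (a b : ℝ) (ha : 0 ≤ a) (hb : b ≤ (1 / 2) * ∑ ω, |μ ω - ν ω|) :
    b - a ≤ ∑ ω ∈ Finset.univ.filter (fun ω => μ ω / ν ω < 1 - a), ν ω := by
  have h1 : ∑ ω, |μ ω - ν ω| = 2 * ∑ ω, max (ν ω - μ ω) 0 := by
    have heq : ∑ ω, |μ ω - ν ω| = ∑ ω, (2 * max (ν ω - μ ω) 0 + (μ ω - ν ω)) := by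
      apply Finset.sum_congr rfl
      intro ω _
      rcases le_total (μ ω) (ν ω) with h | h
      · rw [abs_of_nonpos (by linarith), max_eq_left (by linarith)]; ring
      · rw [abs_of_nonneg (by linarith), max_eq_right (by linarith)]; ring
    rw [heq, Finset.sum_add_distrib, Finset.sum_sub_distrib, hμ1, hν1,
      ← Finset.mul_sum]
    ring
  set A := Finset.univ.filter (fun ω => μ ω / ν ω < 1 - a) with hA
  have h2 : ∑ ω, max (ν ω - μ ω) 0 ≤ (∑ ω ∈ A, ν ω) + a := by
    rw [← Finset.sum_filter_add_sum_filter_not Finset.univ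
      (fun ω => μ ω / ν ω < 1 - a) (fun ω => max (ν ω - μ ω) 0)]
    have hle1 : ∑ ω ∈ A, max (ν ω - μ ω) 0 ≤ ∑ ω ∈ A, ν ω := by
      apply Finset.sum_le_sum
      intro ω _
      have := hμ0 ω
      exact max_le (by linarith) (le_of_lt (hν0 ω))
    have hle2 : ∑ ω ∈ Finset.univ.filter (fun ω => ¬ (μ ω / ν ω < 1 - a)),
        max (ν ω - μ ω) 0 ≤ a := by
      calc ∑ ω ∈ Finset.univ.filter (fun ω => ¬ (μ ω / ν ω < 1 - a)),
            max (ν ω - μ ω) 0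
          ≤ ∑ ω ∈ Finset.univ.filter (fun ω => ¬ (μ ω / ν ω < 1 - a)), a * ν ω := by
            apply Finset.sum_le_sum
            intro ω hω
            simp only [Finset.mem_filter, not_lt] at hω
            have hν := hν0 ω
            have hge : (1 - a) * ν ω ≤ μ ω := by
              have := (le_div_iff₀ hν).mp hω.2
              linarith
            have h0 : 0 ≤ a * ν ω := mul_nonneg ha hν.le
            exact max_le (by nlinarith) h0
        _ ≤ ∑ ω, a * ν ω := by
            apply Finset.sum_le_sum_of_subset_of_nonneg (Finset.filter_subset _ _)
            intro ω _ _
            exact mul_nonneg ha (hν0 ω).le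
        _ = a := by rw [← Finset.mul_sum, hν1, mul_one]
    linarith
  linarith

/-- Decoupling lemma: the probability (over the disorder `x`, with law `Q`) that the
total variation distance between the random measure `νh x` and `ν` exceeds `b` is
bounded by the `Q ⊗ ν`-probability that the likelihood ratio is below `1 - a`,
divided by `b - a`. -/
theorem decoupling_tv_bound
    {Ω Ξ : Type*} [Fintype Ω] [Fintype Ξ]
    (Q : Ω → ℝ) (hQ0 : ∀ x, 0 ≤ Q x) (hQ1 : ∑ x, Q x = 1)
    (ν : Ξ → ℝ) (hν0 : ∀ ω, 0 < ν ω) (hν1 : ∑ ω, ν ω = 1)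
    (νh : Ω → Ξ → ℝ) (hνh0 : ∀ x ω, 0 ≤ νh x ω) (hνh1 : ∀ x, ∑ ω, νh x ω = 1)
    (a b : ℝ) (h0a : 0 < a) (hab : a < b) (hb1 : b < 1) :
    (∑ x ∈ Finset.univ.filter
        (fun x => b ≤ (1 / 2) * ∑ ω, |νh x ω - ν ω|), Q x) ≤
      (∑ x, Q x * ∑ ω ∈ Finset.univ.filter (fun ω => νh x ω / ν ω < 1 - a), ν ω)
        / (b - a) := by
  have hba : 0 < b - a := by linarith
  rw [le_div_iff₀ hba]
  calc (∑ x ∈ Finset.univ.filter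
        (fun x => b ≤ (1 / 2) * ∑ ω, |νh x ω - ν ω|), Q x) * (b - a)
      = ∑ x ∈ Finset.univ.filter
        (fun x => b ≤ (1 / 2) * ∑ ω, |νh x ω - ν ω|), Q x * (b - a) := by
        rw [Finset.sum_mul]
    _ ≤ ∑ x ∈ Finset.univ.filter
        (fun x => b ≤ (1 / 2) * ∑ ω, |νh x ω - ν ω|),
          Q x * ∑ ω ∈ Finset.univ.filter (fun ω => νh x ω / ν ω < 1 - a), ν ω := by
        apply Finset.sum_le_sum
        intro x hx
        simp only [Finset.mem_filter] at hx
        exact mul_le_mul_of_nonneg_left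
          (decoupling_key ν hν0 hν1 (νh x) (hνh0 x) (hνh1 x) a b h0a.le hx.2)
          (hQ0 x)
    _ ≤ ∑ x, Q x * ∑ ω ∈ Finset.univ.filter (fun ω => νh x ω / ν ω < 1 - a), ν ω := by
        apply Finset.sum_le_sum_of_subset_of_nonneg (Finset.filter_subset _ _)
        intro x _ _
        exact mul_nonneg (hQ0 x)
          (Finset.sum_nonneg fun ω _ => (hν0 ω).le)
end

section
/- Let μ₁,…,μₙ and ν₁,…,νₙ be two sequences of probability measures on finite measurable spaces (E₁,F₁),…,(Eₙ,Fₙ) such that ‖μᵢ − νᵢ‖_TV ≥ a > 0 for all i, and let μ = ⊗ᵢμᵢ, ν = ⊗ᵢνᵢ be the product measures. Then there exists an absolute constant c > 0 (independent of n, a, and the measures) such that ‖μ − ν‖_TV ≥ 1 − c·exp(−a²n/c). -/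
open Finset

/-- Hellinger affinity bound: if TV ≥ a then `∑ √(p q) ≤ 1 - a²/2`. -/
lemma hellinger_bound {α : Type} [Fintype α] (p q : α → ℝ)
    (hp : ∀ x, 0 ≤ p x) (hq : ∀ x, 0 ≤ q x)
    (hp1 : ∑ x, p x = 1) (hq1 : ∑ x, q x = 1)
    (a : ℝ) (ha0 : 0 ≤ a) (ha : a ≤ (1 / 2) * ∑ x, |p x - q x|) :
    ∑ x, Real.sqrt (p x * q x) ≤ 1 - a ^ 2 / 2 := by
  set s := ∑ x, Real.sqrt (p x * q x) with hs
  have hs0 : 0 ≤ s := Finset.sum_nonneg fun x _ => Real.sqrt_nonneg _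
  have hsq : ∀ x, Real.sqrt (p x * q x) = Real.sqrt (p x) * Real.sqrt (q x) :=
    fun x => Real.sqrt_mul (hp x) _
  have h1 : ∑ x, (Real.sqrt (p x) - Real.sqrt (q x)) ^ 2 = 2 - 2 * s := by
    have key : ∀ x, (Real.sqrt (p x) - Real.sqrt (q x)) ^ 2
        = p x + q x - 2 * Real.sqrt (p x * q x) := by
      intro x
      rw [hsq x, sub_sq, Real.sq_sqrt (hp x), Real.sq_sqrt (hq x)]
      ring
    simp_rw [key]
    rw [Finset.sum_sub_distrib, Finset.sum_add_distrib, hp1, hq1, ← Finset.mul_sum]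
    ring
  have h2 : ∑ x, (Real.sqrt (p x) + Real.sqrt (q x)) ^ 2 = 2 + 2 * s := by
    have key : ∀ x, (Real.sqrt (p x) + Real.sqrt (q x)) ^ 2
        = p x + q x + 2 * Real.sqrt (p x * q x) := by
      intro x
      rw [hsq x, add_sq, Real.sq_sqrt (hp x), Real.sq_sqrt (hq x)]
      ring
    simp_rw [key]
    rw [Finset.sum_add_distrib, Finset.sum_add_distrib, hp1, hq1, ← Finset.mul_sum]
    ring
  have habs : ∀ x, |p x - q x|
      = |Real.sqrt (p x) - Real.sqrt (q x)| * (Real.sqrt (p x) + Real.sqrt (q x)) := by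
    intro x
    have hfac : p x - q x
        = (Real.sqrt (p x) - Real.sqrt (q x)) * (Real.sqrt (p x) + Real.sqrt (q x)) := by
      nlinarith [Real.sq_sqrt (hp x), Real.sq_sqrt (hq x)]
    rw [hfac, abs_mul, abs_of_nonneg (show (0:ℝ) ≤ Real.sqrt (p x) + Real.sqrt (q x) by positivity)]
  have cs := Finset.sum_mul_sq_le_sq_mul_sq Finset.univ
    (fun x => |Real.sqrt (p x) - Real.sqrt (q x)|)
    (fun x => Real.sqrt (p x) + Real.sqrt (q x))
  simp only [sq_abs] at cs
  rw [h1, h2] at cs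
  have hsum : ∑ x, |p x - q x|
      = ∑ x, |Real.sqrt (p x) - Real.sqrt (q x)| * (Real.sqrt (p x) + Real.sqrt (q x)) := by
    exact Finset.sum_congr rfl fun x _ => habs x
  have h2a : 2 * a ≤ ∑ x, |Real.sqrt (p x) - Real.sqrt (q x)|
      * (Real.sqrt (p x) + Real.sqrt (q x)) := by
    rw [← hsum]; linarith
  have hkey : (2 * a) ^ 2 ≤ (2 - 2 * s) * (2 + 2 * s) := by
    calc (2 * a) ^ 2 ≤ (∑ x, |Real.sqrt (p x) - Real.sqrt (q x)|
        * (Real.sqrt (p x) + Real.sqrt (q x))) ^ 2 := by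
          apply pow_le_pow_left₀ (by linarith) h2a _
      _ ≤ (2 - 2 * s) * (2 + 2 * s) := cs
  nlinarith [sq_nonneg (s - 1 + a ^ 2 / 2), sq_nonneg s, sq_nonneg a]

/-- If each pair `(μᵢ, νᵢ)` is at total variation distance at least `a`, then the
product measures are at total variation distance at least `1 - c·exp(-a²n/c)`,
for an absolute constant `c > 0`. -/
theorem tv_product_lower_bound : ∃ c : ℝ, 0 < c ∧
    ∀ (n : ℕ) (E : Fin n → Type) [∀ i, Fintype (E i)]
      (μ ν : ∀ i, E i → ℝ) (a : ℝ),
      0 < a →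
      (∀ i x, 0 ≤ μ i x) → (∀ i x, 0 ≤ ν i x) →
      (∀ i, ∑ x, μ i x = 1) → (∀ i, ∑ x, ν i x = 1) →
      (∀ i, a ≤ (1 / 2) * ∑ x, |μ i x - ν i x|) →
      1 - c * Real.exp (-(a ^ 2) * n / c) ≤
        (1 / 2) * ∑ σ : (∀ i, E i), |(∏ i, μ i (σ i)) - ∏ i, ν i (σ i)| := by
  refine ⟨2, by norm_num, ?_⟩
  intro n E _ μ ν a ha hμ0 hν0 hμ1 hν1 hTV
  -- the two product measures sum to 1
  have hP1 : ∑ σ : (∀ i, E i), ∏ i, μ i (σ i) = 1 := by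
    rw [← Fintype.prod_sum]
    simp [hμ1]
  have hQ1 : ∑ σ : (∀ i, E i), ∏ i, ν i (σ i) = 1 := by
    rw [← Fintype.prod_sum]
    simp [hν1]
  -- TV as 1 - sum of mins
  have hTVeq : (1 / 2) * ∑ σ : (∀ i, E i), |(∏ i, μ i (σ i)) - ∏ i, ν i (σ i)|
      = 1 - ∑ σ : (∀ i, E i), min (∏ i, μ i (σ i)) (∏ i, ν i (σ i)) := by
    have key : ∀ σ : (∀ i, E i), |(∏ i, μ i (σ i)) - ∏ i, ν i (σ i)|
        = (∏ i, μ i (σ i)) + (∏ i, ν i (σ i))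
          - 2 * min (∏ i, μ i (σ i)) (∏ i, ν i (σ i)) := by
      intro σ
      rcases le_total (∏ i, μ i (σ i)) (∏ i, ν i (σ i)) with h | h
      · rw [min_eq_left h, abs_of_nonpos (by linarith)]; ring
      · rw [min_eq_right h, abs_of_nonneg (by linarith)]; ring
    simp_rw [key]
    rw [Finset.sum_sub_distrib, Finset.sum_add_distrib, hP1, hQ1, ← Finset.mul_sum]
    ring
  -- bound sum of mins by product of Hellinger affinities
  have hmin : ∑ σ : (∀ i, E i), min (∏ i, μ i (σ i)) (∏ i, ν i (σ i))
      ≤ ∏ i, ∑ x, Real.sqrt (μ i x * ν i x) := by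
    rw [Fintype.prod_sum]
    apply Finset.sum_le_sum
    intro σ _
    have h1 : (0:ℝ) ≤ ∏ i, μ i (σ i) := Finset.prod_nonneg fun i _ => hμ0 i _
    have h2 : (0:ℝ) ≤ ∏ i, ν i (σ i) := Finset.prod_nonneg fun i _ => hν0 i _
    have hprod : (∏ i, Real.sqrt (μ i (σ i) * ν i (σ i))) ^ 2
        = (∏ i, μ i (σ i)) * (∏ i, ν i (σ i)) := by
      rw [← Finset.prod_pow]
      rw [← Finset.prod_mul_distrib]
      exact Finset.prod_congr rfl fun i _ =>
        Real.sq_sqrt (mul_nonneg (hμ0 i _) (hν0 i _))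
    have hge : 0 ≤ ∏ i, Real.sqrt (μ i (σ i) * ν i (σ i)) :=
      Finset.prod_nonneg fun i _ => Real.sqrt_nonneg _
    rcases le_total (∏ i, μ i (σ i)) (∏ i, ν i (σ i)) with h | h
    · rw [min_eq_left h]; nlinarith
    · rw [min_eq_right h]; nlinarith
  -- each affinity is at most exp(-a²/2)
  have haff : ∀ i, ∑ x, Real.sqrt (μ i x * ν i x) ≤ Real.exp (-(a ^ 2) / 2) := by
    intro i
    calc ∑ x, Real.sqrt (μ i x * ν i x) ≤ 1 - a ^ 2 / 2 :=
          hellinger_bound (μ i) (ν i) (hμ0 i) (hν0 i) (hμ1 i) (hν1 i) a ha.le (hTV i)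
      _ ≤ Real.exp (-(a ^ 2) / 2) := by
          have := Real.add_one_le_exp (-(a ^ 2) / 2)
          linarith
  have haff0 : ∀ i, 0 ≤ ∑ x, Real.sqrt (μ i x * ν i x) :=
    fun i => Finset.sum_nonneg fun x _ => Real.sqrt_nonneg _
  have hprodle : ∏ i, ∑ x, Real.sqrt (μ i x * ν i x) ≤ Real.exp (-(a ^ 2) * n / 2) := by
    calc ∏ i, ∑ x, Real.sqrt (μ i x * ν i x)
        ≤ ∏ _i : Fin n, Real.exp (-(a ^ 2) / 2) :=
          Finset.prod_le_prod (fun i _ => haff0 i) (fun i _ => haff i)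
      _ = Real.exp (-(a ^ 2) * n / 2) := by
          rw [Finset.prod_const, Finset.card_univ, Fintype.card_fin, ← Real.exp_nat_mul]
          congr 1
          ring
  have hexp : Real.exp (-(a ^ 2) * n / 2) ≤ 2 * Real.exp (-(a ^ 2) * n / 2) := by
    have := Real.exp_pos (-(a ^ 2) * n / 2)
    linarith
  rw [hTVeq]
  linarith [hmin.trans hprodle]
end

section
/- Let μ₁,…,μₙ and ν₁,…,νₙ be two sequences of independent random probability measures on finite spaces with joint law P, such that E‖μᵢ − νᵢ‖_TV ≥ a > 0 for all 1 ≤ i ≤ n, and let μ = ⊗ᵢμᵢ, ν = ⊗ᵢνᵢ be the (random) product measures. Then there exists an absolute constant c > 0 such that P(‖μ − ν‖_TV ≥ 1 − c·exp(−a²n/c)) ≥ 1 − c·exp(−a²n/c). -/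
open Finset
open scoped Classical

private lemma tv_chord {s : ℝ} (h0 : 0 ≤ s) (h1 : s ≤ 1) :
    Real.exp (-s) ≤ 1 - (1 - Real.exp (-1)) * s := by
  have h := convexOn_exp.2 (Set.mem_univ (0:ℝ)) (Set.mem_univ (-1:ℝ))
    (by linarith : (0:ℝ) ≤ 1 - s) h0 (by ring)
  simp only [smul_eq_mul, mul_zero, Real.exp_zero, mul_neg, mul_one] at h
  rw [zero_add] at h
  linarith

/-- Jensen / Cauchy–Schwarz: second moment at least square of first moment. -/
private lemma tv_jensen {W : Type} [Fintype W] (P t : W → ℝ)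
    (hP : ∀ w, 0 ≤ P w) (hP1 : ∑ w, P w = 1) :
    (∑ w, P w * t w) ^ 2 ≤ ∑ w, P w * t w ^ 2 := by
  have h := Finset.sum_mul_sq_le_sq_mul_sq Finset.univ
    (fun w => Real.sqrt (P w)) (fun w => Real.sqrt (P w) * t w)
  have e1 : ∀ w : W, Real.sqrt (P w) * (Real.sqrt (P w) * t w) = P w * t w := by
    intro w
    rw [← mul_assoc, Real.mul_self_sqrt (hP w)]
  have e2 : ∀ w : W, Real.sqrt (P w) ^ 2 = P w := fun w => Real.sq_sqrt (hP w)
  have e3 : ∀ w : W, (Real.sqrt (P w) * t w) ^ 2 = P w * t w ^ 2 := by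
    intro w
    rw [mul_pow, e2]
  simp only [e1, e2, e3] at h
  calc (∑ w, P w * t w) ^ 2 ≤ (∑ w, P w) * ∑ w, P w * t w ^ 2 := h
    _ = ∑ w, P w * t w ^ 2 := by rw [hP1, one_mul]

/-- Bhattacharyya coefficient bound: `∑ √(pq) ≤ exp(-TV²/2)`. -/
private lemma tv_bc {E : Type} [Fintype E] (p q : E → ℝ)
    (hp : ∀ x, 0 ≤ p x) (hq : ∀ x, 0 ≤ q x)
    (hp1 : ∑ x, p x = 1) (hq1 : ∑ x, q x = 1) :
    ∑ x, Real.sqrt (p x * q x) ≤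
      Real.exp (-((1/2) * ∑ x, |p x - q x|) ^ 2 / 2) := by
  set t : ℝ := (1/2) * ∑ x, |p x - q x| with ht
  have hmin : ∑ x, min (p x) (q x) = 1 - t := by
    have : ∀ x : E, min (p x) (q x) = (p x + q x - |p x - q x|) / 2 := by
      intro x; rcases le_total (p x) (q x) with h | h
      · rw [min_eq_left h, abs_of_nonpos (by linarith)]; ring
      · rw [min_eq_right h, abs_of_nonneg (by linarith)]; ring
    simp only [this]
    rw [ht, ← Finset.sum_div, Finset.sum_sub_distrib, Finset.sum_add_distrib, hp1, hq1]
    ring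
  have hmax : ∑ x, max (p x) (q x) = 1 + t := by
    have : ∀ x : E, max (p x) (q x) = (p x + q x + |p x - q x|) / 2 := by
      intro x; rcases le_total (p x) (q x) with h | h
      · rw [max_eq_right h, abs_of_nonpos (by linarith)]; ring
      · rw [max_eq_left h, abs_of_nonneg (by linarith)]; ring
    simp only [this]
    rw [ht, ← Finset.sum_div, Finset.sum_add_distrib, Finset.sum_add_distrib, hp1, hq1]
    ring
  -- Cauchy–Schwarz
  have hcs := Finset.sum_mul_sq_le_sq_mul_sq Finset.univ
    (fun x => Real.sqrt (min (p x) (q x))) (fun x => Real.sqrt (max (p x) (q x)))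
  have e1 : ∀ x : E, Real.sqrt (min (p x) (q x)) * Real.sqrt (max (p x) (q x))
      = Real.sqrt (p x * q x) := by
    intro x
    rw [← Real.sqrt_mul (le_min (hp x) (hq x)), min_mul_max]
  have e2 : ∀ x : E, Real.sqrt (min (p x) (q x)) ^ 2 = min (p x) (q x) :=
    fun x => Real.sq_sqrt (le_min (hp x) (hq x))
  have e3 : ∀ x : E, Real.sqrt (max (p x) (q x)) ^ 2 = max (p x) (q x) :=
    fun x => Real.sq_sqrt (le_max_of_le_left (hp x))
  simp only [e1, e2, e3, hmin, hmax] at hcs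
  have hB0 : 0 ≤ ∑ x, Real.sqrt (p x * q x) :=
    Finset.sum_nonneg fun x _ => Real.sqrt_nonneg _
  have hsq : (∑ x, Real.sqrt (p x * q x)) ^ 2 ≤ 1 - t ^ 2 := by
    calc (∑ x, Real.sqrt (p x * q x)) ^ 2 ≤ (1 - t) * (1 + t) := hcs
      _ = 1 - t ^ 2 := by ring
  calc ∑ x, Real.sqrt (p x * q x)
      = Real.sqrt ((∑ x, Real.sqrt (p x * q x)) ^ 2) := (Real.sqrt_sq hB0).symm
    _ ≤ Real.sqrt (Real.exp (-t ^ 2)) := by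
        apply Real.sqrt_le_sqrt
        calc (∑ x, Real.sqrt (p x * q x)) ^ 2 ≤ 1 - t ^ 2 := hsq
          _ ≤ Real.exp (-t ^ 2) := by
              have := Real.add_one_le_exp (-t ^ 2); linarith
    _ = Real.exp (-t ^ 2 / 2) := by
        rw [← Real.exp_half]

set_option maxHeartbeats 1000000 in
/-- Deterministic: TV of products is at least `1 - exp(-∑ tᵢ²/2)`. -/
private lemma tv_det {n : ℕ} {E : Fin n → Type} [∀ i, Fintype (E i)]
    (A B : ∀ i, E i → ℝ) (hA : ∀ i x, 0 ≤ A i x) (hB : ∀ i x, 0 ≤ B i x)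
    (hA1 : ∀ i, ∑ x, A i x = 1) (hB1 : ∀ i, ∑ x, B i x = 1) :
    1 - Real.exp (-(∑ i, ((1/2) * ∑ x, |A i x - B i x|) ^ 2) / 2) ≤
      (1/2) * ∑ σ : (∀ i, E i), |(∏ i, A i (σ i)) - ∏ i, B i (σ i)| := by
  have hXA : ∑ σ : (∀ i, E i), ∏ i, A i (σ i) = 1 := by
    rw [← Fintype.prod_sum]; simp [hA1]
  have hXB : ∑ σ : (∀ i, E i), ∏ i, B i (σ i) = 1 := by
    rw [← Fintype.prod_sum]; simp [hB1]
  -- 1/2 ∑ |X - Y| = 1 - ∑ min X Y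
  have hid : ∀ σ : (∀ i, E i),
      min (∏ i, A i (σ i)) (∏ i, B i (σ i))
        = ((∏ i, A i (σ i)) + (∏ i, B i (σ i)) - |(∏ i, A i (σ i)) - ∏ i, B i (σ i)|) / 2 := by
    intro σ; rcases le_total (∏ i, A i (σ i)) (∏ i, B i (σ i)) with h | h
    · rw [min_eq_left h, abs_of_nonpos (by linarith)]; ring
    · rw [min_eq_right h, abs_of_nonneg (by linarith)]; ring
  have hmin : ∑ σ : (∀ i, E i), min (∏ i, A i (σ i)) (∏ i, B i (σ i))
      = 1 - (1/2) * ∑ σ : (∀ i, E i), |(∏ i, A i (σ i)) - ∏ i, B i (σ i)| := by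
    rw [Finset.sum_congr rfl (fun σ _ => hid σ), ← Finset.sum_div,
      Finset.sum_sub_distrib, Finset.sum_add_distrib, hXA, hXB]
    ring
  -- min of products ≤ product of √(AB)
  have hptw : ∀ σ : (∀ i, E i), min (∏ i, A i (σ i)) (∏ i, B i (σ i))
      ≤ ∏ i, Real.sqrt (A i (σ i) * B i (σ i)) := by
    intro σ
    have hLA : (0:ℝ) ≤ ∏ i, A i (σ i) := Finset.prod_nonneg fun i _ => hA i _
    have hLB : (0:ℝ) ≤ ∏ i, B i (σ i) := Finset.prod_nonneg fun i _ => hB i _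
    have hsq : (∏ i, Real.sqrt (A i (σ i) * B i (σ i))) ^ 2
        = (∏ i, A i (σ i)) * ∏ i, B i (σ i) := by
      rw [← Finset.prod_pow]
      rw [Finset.prod_congr rfl
        (fun i _ => Real.sq_sqrt (mul_nonneg (hA i _) (hB i _)))]
      rw [← Finset.prod_mul_distrib]
    have hmin2 : (min (∏ i, A i (σ i)) (∏ i, B i (σ i))) ^ 2
        ≤ (∏ i, A i (σ i)) * ∏ i, B i (σ i) := by
      rcases le_total (∏ i, A i (σ i)) (∏ i, B i (σ i)) with h | h
      · rw [min_eq_left h]; nlinarith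
      · rw [min_eq_right h]; nlinarith
    have h0 : 0 ≤ min (∏ i, A i (σ i)) (∏ i, B i (σ i)) := le_min hLA hLB
    have h1 : 0 ≤ ∏ i, Real.sqrt (A i (σ i) * B i (σ i)) :=
      Finset.prod_nonneg fun i _ => Real.sqrt_nonneg _
    nlinarith
  -- sum of products of √(AB) factorizes and is bounded by BC product
  have hfac : ∑ σ : (∀ i, E i), ∏ i, Real.sqrt (A i (σ i) * B i (σ i))
      = ∏ i, ∑ x, Real.sqrt (A i x * B i x) := by rw [← Fintype.prod_sum (fun i x => Real.sqrt (A i x * B i x))]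
  have hbc : ∏ i, ∑ x, Real.sqrt (A i x * B i x)
      ≤ Real.exp (-(∑ i, ((1/2) * ∑ x, |A i x - B i x|) ^ 2) / 2) := by
    calc ∏ i, ∑ x, Real.sqrt (A i x * B i x)
        ≤ ∏ i, Real.exp (-((1/2) * ∑ x, |A i x - B i x|) ^ 2 / 2) := by
          apply Finset.prod_le_prod
          · exact fun i _ => Finset.sum_nonneg fun x _ => Real.sqrt_nonneg _
          · exact fun i _ => tv_bc (A i) (B i) (hA i) (hB i) (hA1 i) (hB1 i)
      _ = Real.exp (-(∑ i, ((1/2) * ∑ x, |A i x - B i x|) ^ 2) / 2) := by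
          rw [← Real.exp_sum]
          congr 1
          rw [← Finset.sum_div, ← Finset.sum_neg_distrib]
  have hsum := Finset.sum_le_sum (fun σ (_ : σ ∈ (Finset.univ : Finset (∀ i, E i))) => hptw σ)
  rw [hfac] at hsum
  have hfin := le_trans hsum hbc
  rw [hmin] at hfin
  linarith

/-- Random version: if `(μᵢ, νᵢ)` are independent pairs of random probability measures
(the randomness of the `i`-th pair being driven by the `i`-th coordinate of a product
probability space) with `E‖μᵢ - νᵢ‖_TV ≥ a`, then with probability at least
`1 - c·exp(-a²n/c)` the product measures are at total variation distance at least
`1 - c·exp(-a²n/c)`, for an absolute constant `c > 0`. -/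
theorem tv_product_lower_bound_random : ∃ c : ℝ, 0 < c ∧
    ∀ (n : ℕ) (W E : Fin n → Type) [∀ i, Fintype (W i)] [∀ i, Fintype (E i)]
      (P : ∀ i, W i → ℝ)
      (μ ν : ∀ i, W i → E i → ℝ) (a : ℝ),
      0 < a →
      (∀ i w, 0 ≤ P i w) → (∀ i, ∑ w, P i w = 1) →
      (∀ i w x, 0 ≤ μ i w x) → (∀ i w x, 0 ≤ ν i w x) →
      (∀ i w, ∑ x, μ i w x = 1) → (∀ i w, ∑ x, ν i w x = 1) →
      (∀ i, a ≤ ∑ w, P i w * ((1 / 2) * ∑ x, |μ i w x - ν i w x|)) →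
      1 - c * Real.exp (-(a ^ 2) * n / c) ≤
        ∑ w ∈ Finset.univ.filter (fun w : ∀ i, W i =>
            1 - c * Real.exp (-(a ^ 2) * n / c) ≤
              (1 / 2) * ∑ σ : (∀ i, E i),
                |(∏ i, μ i (w i) (σ i)) - ∏ i, ν i (w i) (σ i)|),
          ∏ i, P i (w i) := by
  refine ⟨8, by norm_num, ?_⟩
  intro n W E _ _ P μ ν a ha hP0 hP1 hμ0 hν0 hμ1 hν1 hE
  -- the TV distance at coordinate i, sample u
  set t : ∀ i, W i → ℝ := fun i u => (1/2) * ∑ x, |μ i u x - ν i u x| with htdef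
  have ht0 : ∀ i u, 0 ≤ t i u :=
    fun i u => mul_nonneg (by norm_num) (Finset.sum_nonneg fun x _ => abs_nonneg _)
  have ht1 : ∀ i u, t i u ≤ 1 := by
    intro i u
    have : ∑ x, |μ i u x - ν i u x| ≤ ∑ x, (μ i u x + ν i u x) := by
      apply Finset.sum_le_sum
      intro x _
      rw [abs_sub_le_iff]
      constructor <;> nlinarith [hμ0 i u x, hν0 i u x]
    have h2 : ∑ x, (μ i u x + ν i u x) = 2 := by
      rw [Finset.sum_add_distrib, hμ1 i u, hν1 i u]; norm_num
    simp only [htdef]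
    linarith
  -- second moment bound
  have hmom : ∀ i, a^2 ≤ ∑ u, P i u * (t i u)^2 := by
    intro i
    have h1 : a^2 ≤ (∑ u, P i u * t i u)^2 := by nlinarith [hE i]
    exact le_trans h1 (tv_jensen (P i) (t i) (hP0 i) (hP1 i))
  have hexp1 : Real.exp (-1) ≤ 1/2 := by
    have h2 : (2:ℝ) ≤ Real.exp 1 := by nlinarith [Real.exp_one_gt_d9]
    have hm : Real.exp (-1) * Real.exp 1 = 1 := by rw [← Real.exp_add]; norm_num
    nlinarith [Real.exp_pos (-1)]
  -- per-coordinate MGF bound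
  have hmgf_i : ∀ i, ∑ u, P i u * Real.exp (-(t i u)^2) ≤ Real.exp (-(a^2)/2) := by
    intro i
    have step1 : ∑ u, P i u * Real.exp (-(t i u)^2)
        ≤ ∑ u, P i u * (1 - (1 - Real.exp (-1)) * (t i u)^2) := by
      apply Finset.sum_le_sum
      intro u _
      exact mul_le_mul_of_nonneg_left (tv_chord (sq_nonneg _)
        (by nlinarith [ht0 i u, ht1 i u])) (hP0 i u)
    have step2 : ∑ u, P i u * (1 - (1 - Real.exp (-1)) * (t i u)^2)
        = 1 - (1 - Real.exp (-1)) * ∑ u, P i u * (t i u)^2 := by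
      have e : ∀ u, P i u * (1 - (1 - Real.exp (-1)) * (t i u)^2)
          = P i u - (1 - Real.exp (-1)) * (P i u * (t i u)^2) := fun u => by ring
      rw [Finset.sum_congr rfl (fun u _ => e u), Finset.sum_sub_distrib, hP1 i,
        ← Finset.mul_sum]
    have step3 : 1 - (1 - Real.exp (-1)) * ∑ u, P i u * (t i u)^2 ≤ 1 - (a^2)/2 := by
      have hm := hmom i
      nlinarith [sq_nonneg a]
    have step4 : 1 - (a^2)/2 ≤ Real.exp (-(a^2)/2) := by
      have := Real.add_one_le_exp (-(a^2)/2); linarith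
    linarith
  -- factorization of the global MGF
  have hfacw : ∀ w : (∀ i, W i), (∏ i, P i (w i)) * Real.exp (-∑ i, (t i (w i))^2)
      = ∏ i, (P i (w i) * Real.exp (-(t i (w i))^2)) := by
    intro w
    rw [Finset.prod_mul_distrib, ← Real.exp_sum]
    congr 1
    rw [Finset.sum_neg_distrib]
  have hmgf : ∑ w : (∀ i, W i), (∏ i, P i (w i)) * Real.exp (-∑ i, (t i (w i))^2)
      ≤ Real.exp (-(a^2) * n / 2) := by
    rw [Finset.sum_congr rfl (fun w _ => hfacw w),
        ← Fintype.prod_sum (fun i u => P i u * Real.exp (-(t i u)^2))]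
    calc ∏ i, ∑ u, P i u * Real.exp (-(t i u)^2)
        ≤ ∏ _i : Fin n, Real.exp (-(a^2)/2) := Finset.prod_le_prod
          (fun i _ => Finset.sum_nonneg fun u _ =>
            mul_nonneg (hP0 i u) (Real.exp_pos _).le)
          (fun i _ => hmgf_i i)
      _ = Real.exp (-(a^2) * n / 2) := by
          rw [Finset.prod_const, Finset.card_univ, Fintype.card_fin, ← Real.exp_nat_mul]
          congr 1; ring
  -- total mass one
  have htot : ∑ w : (∀ i, W i), ∏ i, P i (w i) = 1 := by
    rw [← Fintype.prod_sum]; simp [hP1]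
  have hprod0 : ∀ w : (∀ i, W i), 0 ≤ ∏ i, P i (w i) :=
    fun w => Finset.prod_nonneg fun i _ => hP0 i _
  -- Markov inequality for the bad event
  have hbad : ∑ w ∈ Finset.univ.filter (fun w : ∀ i, W i =>
        ∑ i, (t i (w i))^2 < a^2 * n / 4), ∏ i, P i (w i)
      ≤ Real.exp (-(a^2) * n / 4) := by
    have hstep : ∀ w ∈ Finset.univ.filter (fun w : ∀ i, W i =>
        ∑ i, (t i (w i))^2 < a^2 * n / 4),
        ∏ i, P i (w i) ≤ Real.exp (a^2 * n / 4) *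
          ((∏ i, P i (w i)) * Real.exp (-∑ i, (t i (w i))^2)) := by
      intro w hw
      rw [Finset.mem_filter] at hw
      have h1 : (1:ℝ) ≤ Real.exp (a^2 * n / 4) * Real.exp (-∑ i, (t i (w i))^2) := by
        rw [← Real.exp_add]
        rw [show (1:ℝ) = Real.exp 0 by simp]
        apply Real.exp_le_exp.2
        linarith [hw.2]
      nlinarith [hprod0 w]
    calc ∑ w ∈ Finset.univ.filter (fun w : ∀ i, W i =>
          ∑ i, (t i (w i))^2 < a^2 * n / 4), ∏ i, P i (w i)
        ≤ ∑ w ∈ Finset.univ.filter (fun w : ∀ i, W i =>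
            ∑ i, (t i (w i))^2 < a^2 * n / 4),
            Real.exp (a^2 * n / 4) *
              ((∏ i, P i (w i)) * Real.exp (-∑ i, (t i (w i))^2)) :=
          Finset.sum_le_sum hstep
      _ = Real.exp (a^2 * n / 4) * ∑ w ∈ Finset.univ.filter (fun w : ∀ i, W i =>
            ∑ i, (t i (w i))^2 < a^2 * n / 4),
            (∏ i, P i (w i)) * Real.exp (-∑ i, (t i (w i))^2) := by
          rw [← Finset.mul_sum]
      _ ≤ Real.exp (a^2 * n / 4) * ∑ w : (∀ i, W i),
            (∏ i, P i (w i)) * Real.exp (-∑ i, (t i (w i))^2) := by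
          apply mul_le_mul_of_nonneg_left _ (Real.exp_pos _).le
          apply Finset.sum_le_sum_of_subset_of_nonneg (Finset.filter_subset _ _)
          intro w _ _
          exact mul_nonneg (hprod0 w) (Real.exp_pos _).le
      _ ≤ Real.exp (a^2 * n / 4) * Real.exp (-(a^2) * n / 2) :=
          mul_le_mul_of_nonneg_left hmgf (Real.exp_pos _).le
      _ = Real.exp (-(a^2) * n / 4) := by
          rw [← Real.exp_add]; congr 1; ring
  -- good event is contained in the target event
  have hGsub : Finset.univ.filter (fun w : ∀ i, W i =>
        ¬ (∑ i, (t i (w i))^2 < a^2 * n / 4))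
      ⊆ Finset.univ.filter (fun w : ∀ i, W i =>
          1 - 8 * Real.exp (-(a ^ 2) * n / 8) ≤
            (1 / 2) * ∑ σ : (∀ i, E i),
              |(∏ i, μ i (w i) (σ i)) - ∏ i, ν i (w i) (σ i)|) := by
    intro w hw
    rw [Finset.mem_filter] at hw ⊢
    refine ⟨Finset.mem_univ _, ?_⟩
    have hw2 : a^2 * n / 4 ≤ ∑ i, (t i (w i))^2 := le_of_not_gt hw.2
    have hdet := tv_det (fun i => μ i (w i)) (fun i => ν i (w i))
      (fun i => hμ0 i (w i)) (fun i => hν0 i (w i))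
      (fun i => hμ1 i (w i)) (fun i => hν1 i (w i))
    have h1 : Real.exp (-(∑ i, (t i (w i))^2)/2) ≤ Real.exp (-(a^2) * n / 8) := by
      apply Real.exp_le_exp.2
      linarith
    have h2 : Real.exp (-(a^2) * n / 8) ≤ 8 * Real.exp (-(a ^ 2) * n / 8) := by
      linarith [(Real.exp_pos (-(a^2) * (n:ℝ) / 8)).le]
    linarith [hdet]
  -- put everything together
  have hsplit := Finset.sum_filter_add_sum_filter_not Finset.univ
    (fun w : ∀ i, W i => ∑ i, (t i (w i))^2 < a^2 * n / 4)
    (fun w => ∏ i, P i (w i))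
  rw [htot] at hsplit
  have hmono := Finset.sum_le_sum_of_subset_of_nonneg hGsub (fun w _ _ => hprod0 w)
  have hee : Real.exp (-(a^2) * n / 4) ≤ 8 * Real.exp (-(a ^ 2) * n / 8) := by
    have h1 : Real.exp (-(a^2) * n / 4) ≤ Real.exp (-(a^2) * n / 8) := by
      apply Real.exp_le_exp.2
      nlinarith [sq_nonneg a, (Nat.cast_nonneg n : (0:ℝ) ≤ (n:ℝ))]
    linarith [(Real.exp_pos (-(a^2) * (n:ℝ) / 8)).le]
  linarith [hmono, hbad, hee, hsplit]
end

section
/- Let μ and ν be probability measures on a finite product space Σ_U × Σ_V. For σ_V ∈ Σ_V with positive marginal mass under both measures, let μ(·|σ_V) and ν(·|σ_V) denote the conditional measures on Σ_U given the second coordinate equals σ_V. Then 1 − ‖μ − ν‖_TV ≤ 2 · max_{σ_V ∈ Σ_V} (1 − ‖μ(·|σ_V) − ν(·|σ_V)‖_TV), where the maximum is over σ_V charged by μ or ν. -/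
open Finset

private lemma min_eq_half {x y : ℝ} : min x y = (x + y - |x - y|) / 2 := by
  rcases le_total x y with h | h
  · rw [min_eq_left h, abs_of_nonpos (by linarith)]; ring
  · rw [min_eq_right h, abs_of_nonneg (by linarith)]; ring

/-- `1 - ‖μ - ν‖_TV` on a product space is at most twice the maximum over charged
second coordinates `σ_V` of `1 - ‖μ(·|σ_V) - ν(·|σ_V)‖_TV`: formulated as the
existence of a charged `σ_V` witnessing the bound. -/
theorem one_sub_tv_le_two_max_conditional
    {SU SV : Type*} [Fintype SU] [Fintype SV]
    (μ ν : SU × SV → ℝ) (hμ0 : ∀ p, 0 ≤ μ p) (hν0 : ∀ p, 0 ≤ ν p)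
    (hμ1 : ∑ p, μ p = 1) (hν1 : ∑ p, ν p = 1) :
    ∃ σV : SV, (0 < ∑ u, μ (u, σV) ∨ 0 < ∑ u, ν (u, σV)) ∧
      1 - (1 / 2) * ∑ p, |μ p - ν p| ≤
        2 * (1 - (1 / 2) * ∑ u,
          |μ (u, σV) / (∑ u', μ (u', σV)) - ν (u, σV) / (∑ u', ν (u', σV))|) := by
  classical
  set a : SV → ℝ := fun σ => ∑ u, μ (u, σ) with ha
  set b : SV → ℝ := fun σ => ∑ u, ν (u, σ) with hb
  have ha0 : ∀ σ, 0 ≤ a σ := fun σ => Finset.sum_nonneg fun u _ => hμ0 _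
  have hb0 : ∀ σ, 0 ≤ b σ := fun σ => Finset.sum_nonneg fun u _ => hν0 _
  set g : SV → ℝ := fun σ =>
    1 - (1 / 2) * ∑ u, |μ (u, σ) / a σ - ν (u, σ) / b σ| with hg
  set m : SV → ℝ := fun σ => ∑ u, min (μ (u, σ)) (ν (u, σ)) with hm
  have hsa : ∑ σ, a σ = 1 := by
    calc ∑ σ, a σ = ∑ p, μ p := (Fintype.sum_prod_type_right μ).symm
      _ = 1 := hμ1
  have hsb : ∑ σ, b σ = 1 := by
    calc ∑ σ, b σ = ∑ p, ν p := (Fintype.sum_prod_type_right ν).symm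
      _ = 1 := hν1
  -- sum of μ/a over u is ≤ 1
  have hA : ∀ σ, ∑ u, μ (u, σ) / a σ ≤ 1 := by
    intro σ
    rcases eq_or_lt_of_le (ha0 σ) with h | h
    · simp [← h]
    · rw [← Finset.sum_div]
      have hr : (∑ u, μ (u, σ)) = a σ := rfl
      rw [hr, div_self h.ne']
  have hB : ∀ σ, ∑ u, ν (u, σ) / b σ ≤ 1 := by
    intro σ
    rcases eq_or_lt_of_le (hb0 σ) with h | h
    · simp [← h]
    · rw [← Finset.sum_div]
      have hr : (∑ u, ν (u, σ)) = b σ := rfl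
      rw [hr, div_self h.ne']
  -- g is nonnegative
  have hg0 : ∀ σ, 0 ≤ g σ := by
    intro σ
    have h1 : ∑ u, |μ (u, σ) / a σ - ν (u, σ) / b σ| ≤ 2 := by
      calc ∑ u, |μ (u, σ) / a σ - ν (u, σ) / b σ|
          ≤ ∑ u, (μ (u, σ) / a σ + ν (u, σ) / b σ) := by
            refine Finset.sum_le_sum fun u _ => ?_
            have h2 : 0 ≤ μ (u, σ) / a σ := div_nonneg (hμ0 _) (ha0 σ)
            have h3 : 0 ≤ ν (u, σ) / b σ := div_nonneg (hν0 _) (hb0 σ)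
            rw [abs_sub_le_iff]; constructor <;> linarith
        _ = (∑ u, μ (u, σ) / a σ) + ∑ u, ν (u, σ) / b σ := Finset.sum_add_distrib
        _ ≤ 1 + 1 := add_le_add (hA σ) (hB σ)
        _ = 2 := by norm_num
    rw [hg]; dsimp only; linarith
  -- the set of charged σ is nonempty
  have hne : ∃ σ, 0 < a σ ∨ 0 < b σ := by
    by_contra h
    push_neg at h
    have h1 : ∀ σ, a σ = 0 := fun σ => le_antisymm (h σ).1 (ha0 σ)
    have : (1 : ℝ) = 0 := by rw [← hsa]; simp [h1]
    norm_num at this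
  obtain ⟨σ0, hσ0⟩ := hne
  obtain ⟨σV, hmem, hmax⟩ :=
    Finset.exists_max_image (Finset.univ.filter fun σ => 0 < a σ ∨ 0 < b σ) g
      ⟨σ0, Finset.mem_filter.mpr ⟨Finset.mem_univ _, hσ0⟩⟩
  have hcharged : 0 < a σV ∨ 0 < b σV := (Finset.mem_filter.mp hmem).2
  refine ⟨σV, hcharged, ?_⟩
  -- per-slice bound : m σ ≤ (a σ + b σ) * g σV
  have hslice : ∀ σ, m σ ≤ (a σ + b σ) * g σV := by
    intro σ
    by_cases hch : 0 < a σ ∨ 0 < b σ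
    · have hgle : g σ ≤ g σV :=
        hmax σ (Finset.mem_filter.mpr ⟨Finset.mem_univ _, hch⟩)
      have key : m σ ≤ (a σ + b σ) * g σ := by
        rcases eq_or_lt_of_le (ha0 σ) with hA0 | hApos
        · -- a σ = 0, so μ (u, σ) = 0 for all u
          have hz : ∀ u, μ (u, σ) = 0 := by
            intro u
            have := (Finset.sum_eq_zero_iff_of_nonneg
              (fun u _ => hμ0 (u, σ))).mp hA0.symm
            exact this u (Finset.mem_univ u)
          have : m σ = 0 := by
            rw [hm]; dsimp only
            refine Finset.sum_eq_zero fun u _ => ?_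
            rw [hz u, min_eq_left (hν0 _)]
          rw [this]
          exact mul_nonneg (by linarith [ha0 σ, hb0 σ]) (hg0 σ)
        · rcases eq_or_lt_of_le (hb0 σ) with hB0 | hBpos
          · have hz : ∀ u, ν (u, σ) = 0 := by
              intro u
              have := (Finset.sum_eq_zero_iff_of_nonneg
                (fun u _ => hν0 (u, σ))).mp hB0.symm
              exact this u (Finset.mem_univ u)
            have : m σ = 0 := by
              rw [hm]; dsimp only
              refine Finset.sum_eq_zero fun u _ => ?_
              rw [hz u, min_eq_right (hμ0 _)]
            rw [this]
            exact mul_nonneg (by linarith [ha0 σ, hb0 σ]) (hg0 σ)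
          · -- both positive: g σ = ∑ min of conditionals
            have hga : ∑ u, μ (u, σ) / a σ = 1 := by
              rw [← Finset.sum_div, div_self hApos.ne']
            have hgb : ∑ u, ν (u, σ) / b σ = 1 := by
              rw [← Finset.sum_div, div_self hBpos.ne']
            have hgeq : g σ = ∑ u, min (μ (u, σ) / a σ) (ν (u, σ) / b σ) := by
              rw [hg]; dsimp only
              have : ∑ u, min (μ (u, σ) / a σ) (ν (u, σ) / b σ)
                  = ∑ u, ((μ (u, σ) / a σ + ν (u, σ) / b σ
                      - |μ (u, σ) / a σ - ν (u, σ) / b σ|) / 2) := by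
                refine Finset.sum_congr rfl fun u _ => min_eq_half
              rw [this]
              rw [← Finset.sum_div, Finset.sum_sub_distrib, Finset.sum_add_distrib,
                hga, hgb]
              ring
            rw [hgeq, hm, Finset.mul_sum]
            refine Finset.sum_le_sum fun u _ => ?_
            rcases le_total (μ (u, σ) / a σ) (ν (u, σ) / b σ) with hle | hle
            · rw [min_eq_left hle]
              calc min (μ (u, σ)) (ν (u, σ)) ≤ μ (u, σ) := min_le_left _ _
                _ = a σ * (μ (u, σ) / a σ) := by
                    field_simp
                _ ≤ (a σ + b σ) * (μ (u, σ) / a σ) :=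
                    mul_le_mul_of_nonneg_right (by linarith [hb0 σ])
                      (div_nonneg (hμ0 _) (ha0 σ))
            · rw [min_eq_right hle]
              calc min (μ (u, σ)) (ν (u, σ)) ≤ ν (u, σ) := min_le_right _ _
                _ = b σ * (ν (u, σ) / b σ) := by
                    field_simp
                _ ≤ (a σ + b σ) * (ν (u, σ) / b σ) :=
                    mul_le_mul_of_nonneg_right (by linarith [ha0 σ])
                      (div_nonneg (hν0 _) (hb0 σ))
      calc m σ ≤ (a σ + b σ) * g σ := key
        _ ≤ (a σ + b σ) * g σV :=
          mul_le_mul_of_nonneg_left hgle (by linarith [ha0 σ, hb0 σ])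
    · push_neg at hch
      have hA0 : a σ = 0 := le_antisymm hch.1 (ha0 σ)
      have hz : ∀ u, μ (u, σ) = 0 := by
        intro u
        have := (Finset.sum_eq_zero_iff_of_nonneg
          (fun u _ => hμ0 (u, σ))).mp hA0
        exact this u (Finset.mem_univ u)
      have hm0 : m σ = 0 := by
        rw [hm]; dsimp only
        refine Finset.sum_eq_zero fun u _ => ?_
        rw [hz u, min_eq_left (hν0 _)]
      rw [hm0]
      exact mul_nonneg (by linarith [ha0 σ, hb0 σ]) (hg0 σV)
  -- LHS = ∑ σ, m σ
  have hLHS : 1 - (1 / 2) * ∑ p, |μ p - ν p| = ∑ σ, m σ := by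
    have h1 : ∑ p, min (μ p) (ν p)
        = ∑ p, ((μ p + ν p - |μ p - ν p|) / 2) :=
      Finset.sum_congr rfl fun p _ => min_eq_half
    have h2 : ∑ σ, m σ = ∑ p, min (μ p) (ν p) := by
      exact (Fintype.sum_prod_type_right fun p => min (μ p) (ν p)).symm
    rw [h2, h1, ← Finset.sum_div, Finset.sum_sub_distrib, Finset.sum_add_distrib,
      hμ1, hν1]
    ring
  have hfinal : ∑ σ, m σ ≤ 2 * g σV := by
    calc ∑ σ, m σ ≤ ∑ σ, (a σ + b σ) * g σV :=
          Finset.sum_le_sum fun σ _ => hslice σ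
      _ = (∑ σ, (a σ + b σ)) * g σV := by rw [Finset.sum_mul]
      _ = 2 * g σV := by
          rw [Finset.sum_add_distrib, hsa, hsb]; norm_num
  rw [hLHS]
  exact hfinal
end

section
/- Let X be an integrable random variable with E[exp(X)] < ∞, Var(X) ≥ c₁ > 0, and X − E[X] ≥ −1 almost surely. Then ln(E[exp(X)]) ≥ E[X] + ln(1 + c₁/3). -/
/-!
Writing `Y = X - E X`, we have `e^X = e^{E X} e^Y ≥ e^{E X} (1 + Y + Y²/3)` pointwise because
`Y ≥ -1`; taking expectations, `E Y = 0` and `E Y² = Var X`, so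
`E[e^X] ≥ e^{E X} (1 + Var X / 3)`, and the claim follows by taking logarithms.
-/

open MeasureTheory ProbabilityTheory Real

lemma one_add_add_sq_div_three_le_exp {y : ℝ} (hy : -1 ≤ y) :
    1 + y + y ^ 2 / 3 ≤ exp y := by
  rcases le_or_gt 0 y with hy0 | hy0
  · nlinarith [quadratic_le_exp_of_nonneg hy0, sq_nonneg y]
  · have htaylor := (abs_sub_le_iff.1 <|
      Real.exp_bound (abs_le.2 ⟨hy, hy0.le.trans zero_le_one⟩) (n := 5) (by norm_num)).2
    simp only [Finset.sum_range_succ, Finset.sum_range_zero, abs_of_neg hy0] at htaylor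
    norm_num [Nat.factorial] at htaylor
    -- on `[-1, 0)` the Taylor remainder `|y|⁵/100` is absorbed by `y²(1 + y)/6 + y⁴/24`
    nlinarith [mul_nonneg (sq_nonneg y) (neg_le_iff_add_nonneg.1 hy),
      mul_nonneg (pow_two_nonneg (y ^ 2)) (by linarith : (0 : ℝ) ≤ 1 / 24 + y / 100)]

lemma exp_integral_mul_one_add_variance_div_three_le {Ω : Type*} [MeasurableSpace Ω]
    {P : Measure Ω} [IsProbabilityMeasure P] {X : Ω → ℝ} (hX : MemLp X 2 P)
    (hexp : Integrable (fun ω => exp (X ω)) P) (hlb : ∀ᵐ ω ∂P, -1 ≤ X ω - P[X]) :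
    exp P[X] * (1 + Var[X; P] / 3) ≤ ∫ ω, exp (X ω) ∂P := by
  set m := P[X]
  have hXint : Integrable X P := hX.integrable one_le_two
  have hsq : Integrable (fun ω => (X ω - m) ^ 2) P := (hX.sub (memLp_const m)).integrable_sq
  have hdev : Integrable (fun ω => X ω - m) P := hXint.sub (integrable_const m)
  have hcenter : Integrable (fun ω => 1 + (X ω - m)) P := (integrable_const 1).add hdev
  have hpointwise : ∀ᵐ ω ∂P,
      exp m * (1 + (X ω - m) + (X ω - m) ^ 2 / 3) ≤ exp (X ω) := by
    filter_upwards [hlb] with ω hω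
    calc exp m * (1 + (X ω - m) + (X ω - m) ^ 2 / 3)
        ≤ exp m * exp (X ω - m) := by gcongr; exact one_add_add_sq_div_three_le_exp hω
      _ = exp (X ω) := by rw [← exp_add, add_sub_cancel]
  have hlower : ∫ ω, exp m * (1 + (X ω - m) + (X ω - m) ^ 2 / 3) ∂P
      = exp m * (1 + Var[X; P] / 3) := by
    have hmean : ∫ ω, (X ω - m) ∂P = 0 := by
      rw [integral_sub hXint (integrable_const m)]
      simp [m]
    rw [integral_const_mul, integral_add hcenter (hsq.div_const 3), integral_div,
      integral_add (integrable_const 1) hdev, hmean,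
      ← variance_eq_integral hX.aemeasurable]
    simp
  rw [← hlower]
  exact integral_mono_ae ((hcenter.add (hsq.div_const 3)).const_mul _) hexp hpointwise

theorem log_mgf_ge_mean_add_general
    {Ω : Type*} [MeasurableSpace Ω] (P : Measure Ω) [IsProbabilityMeasure P]
    (X : Ω → ℝ) (c₁ : ℝ) (hc₁ : 0 < c₁)
    (hXint : Integrable X P)
    (hexp : Integrable (fun ω => Real.exp (X ω)) P)
    (hvar : c₁ ≤ variance X P)
    (hlb : ∀ᵐ ω ∂P, -1 ≤ X ω - ∫ x, X x ∂P) :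
    (∫ ω, X ω ∂P) + Real.log (1 + c₁ / 3) ≤
      Real.log (∫ ω, Real.exp (X ω) ∂P) := by
  -- `variance` is `0` outside `L²`, so a positive variance forces square integrability
  have hX : MemLp X 2 P :=
    memLp_two_of_variance_ne_zero hXint.aestronglyMeasurable (hc₁.trans_le hvar).ne'
  have hmgf := exp_integral_mul_one_add_variance_div_three_le hX hexp hlb
  calc (∫ ω, X ω ∂P) + log (1 + c₁ / 3) = log (exp P[X] * (1 + c₁ / 3)) := by
        rw [log_mul (exp_ne_zero _) (by positivity), log_exp]
    _ ≤ log (∫ ω, exp (X ω) ∂P) := log_le_log (by positivity) (le_trans (by gcongr) hmgf)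

/-- Quantitative reverse Jensen: if `Var(X) ≥ c₁ > 0` and `X - E X ≥ -1` a.s., then
`ln E[e^X] ≥ E X + ln(1 + c₁/3)`. -/
theorem log_mgf_ge_mean_add
    {Ω : Type*} [MeasurableSpace Ω] (P : Measure Ω) [IsProbabilityMeasure P]
    (X : Ω → ℝ) (c₁ : ℝ) (hc₁ : 0 < c₁)
    (hXint : Integrable X P)
    (hX2 : Integrable (fun ω => X ω ^ 2) P)
    (hexp : Integrable (fun ω => Real.exp (X ω)) P)
    (hvar : c₁ ≤ variance X P)
    (hlb : ∀ᵐ ω ∂P, -1 ≤ X ω - ∫ x, X x ∂P) :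
    (∫ ω, X ω ∂P) + Real.log (1 + c₁ / 3) ≤
      Real.log (∫ ω, Real.exp (X ω) ∂P) :=
  log_mgf_ge_mean_add_general P X c₁ hc₁ hXint hexp hvar hlb
end

section
/- Let X be a random variable on a probability space (Ω, F, P) with Var(X) ≥ c₁ > 0 and E[X⁴] ≤ c₂ < ∞. Then there exists a constant c₃ > 0 depending only on c₁ and c₂, and measurable sets Ω₁, Ω₂ ⊆ Ω with P(Ω₁) ≥ c₃ and P(Ω₂) ≥ c₃, such that |X(ω₁) − X(ω₂)| ≥ √c₁/2 for every ω₁ ∈ Ω₁ and ω₂ ∈ Ω₂. -/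
/-!
Centre `X`: the variable `Y = X - E X` has `E Y² = Var X ≥ c₁` and `E Y⁴ ≤ 16 E X⁴`. With
`s = √c₁/2`, the event `{|Y| ≥ s}` carries `E[Y²; |Y| ≥ s] ≥ 3c₁/4`, so by Cauchy–Schwarz it has
probability at least `(3c₁/4)² / E Y⁴` (Paley–Zygmund). Half of this mass sits on one side, say
`{Y ≥ s}`. As `E Y = 0`, `s P(Y ≥ s) ≤ E[Y; Y > 0] = E[-Y; Y ≤ 0] ≤ √(P(Y ≤ 0) E Y²)`, so
`{Y ≤ 0}` has probability bounded below as well, and `X` differs by at least `s` between the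
two events.
-/

open MeasureTheory ProbabilityTheory Filter

theorem sub_pow_four_le (a b : ℝ) : (a - b) ^ 4 ≤ 8 * (a ^ 4 + b ^ 4) := by
  nlinarith [sq_nonneg (a + b), sq_nonneg (a ^ 2 - b ^ 2), sq_nonneg ((a + b) ^ 2)]

section Moments

variable {Ω : Type*} [MeasurableSpace Ω] {μ : Measure Ω}

theorem pow_integral_le_integral_pow [IsProbabilityMeasure μ] {f : Ω → ℝ} {n : ℕ} (hn : Even n)
    (hf : Integrable f μ) (hfn : Integrable (fun ω ↦ f ω ^ n) μ) :
    (∫ ω, f ω ∂μ) ^ n ≤ ∫ ω, f ω ^ n ∂μ :=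
  (hn.convexOn_pow (𝕜 := ℝ)).map_integral_le (continuous_pow n).continuousOn isClosed_univ
    (.of_forall fun _ ↦ Set.mem_univ _) hf hfn

theorem MeasureTheory.Integrable.sub_const_pow_four [IsFiniteMeasure μ] {X : Ω → ℝ}
    (hX : AEStronglyMeasurable X μ) (hX4 : Integrable (fun ω ↦ X ω ^ 4) μ) (c : ℝ) :
    Integrable (fun ω ↦ (X ω - c) ^ 4) μ :=
  ((hX4.add (integrable_const (c ^ 4))).const_mul 8).mono' (by fun_prop) <| .of_forall fun ω ↦ by
    rw [Real.norm_of_nonneg (by positivity)]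
    exact sub_pow_four_le (X ω) c

theorem MeasureTheory.Integrable.sub_const_sq [IsFiniteMeasure μ] {X : Ω → ℝ}
    (hX : Integrable X μ) (hX2 : Integrable (fun ω ↦ X ω ^ 2) μ) (c : ℝ) :
    Integrable (fun ω ↦ (X ω - c) ^ 2) μ := by
  simp only [sub_sq]
  exact (hX2.sub (hX.const_mul _ |>.mul_const _)).add (integrable_const _)

theorem integral_sub_integral_pow_four_le [IsProbabilityMeasure μ] {X : Ω → ℝ}
    (hX : Integrable X μ) (hX4 : Integrable (fun ω ↦ X ω ^ 4) μ) :
    ∫ ω, (X ω - μ[X]) ^ 4 ∂μ ≤ 16 * ∫ ω, X ω ^ 4 ∂μ := by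
  set m := μ[X]
  have hm : m ^ 4 ≤ ∫ ω, X ω ^ 4 ∂μ := pow_integral_le_integral_pow (by decide) hX hX4
  calc ∫ ω, (X ω - m) ^ 4 ∂μ ≤ ∫ ω, 8 * (X ω ^ 4 + m ^ 4) ∂μ :=
        integral_mono (hX4.sub_const_pow_four hX.aestronglyMeasurable m)
          ((hX4.add (integrable_const _)).const_mul 8) fun ω ↦ sub_pow_four_le (X ω) m
    _ = 8 * (∫ ω, X ω ^ 4 ∂μ + m ^ 4) := by
        rw [integral_const_mul, integral_add hX4 (integrable_const _), integral_const]
        simp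
    _ ≤ 16 * ∫ ω, X ω ^ 4 ∂μ := by linarith

theorem sq_setIntegral_le_measureReal_mul_setIntegral_sq [IsFiniteMeasure μ] {f : Ω → ℝ}
    {s : Set Ω} (hf : IntegrableOn f s μ) (hf2 : IntegrableOn (fun x ↦ f x ^ 2) s μ) :
    (∫ x in s, f x ∂μ) ^ 2 ≤ μ.real s * ∫ x in s, f x ^ 2 ∂μ := by
  rcases eq_or_ne (μ s) 0 with hs | hs
  · simp [Measure.restrict_eq_zero.2 hs, measureReal_def, hs]
  have hpos : 0 < μ.real s := ENNReal.toReal_pos hs (measure_ne_top μ s)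
  have jensen := (Even.convexOn_pow (𝕜 := ℝ) even_two).map_set_average_le
    (continuous_pow 2).continuousOn isClosed_univ hs (measure_ne_top μ s)
    (.of_forall fun _ ↦ Set.mem_univ _) hf hf2
  rw [setAverage_eq, setAverage_eq, smul_eq_mul, smul_eq_mul, mul_pow,
    inv_pow, ← div_eq_inv_mul, ← div_eq_inv_mul, div_le_div_iff₀ (by positivity) hpos] at jensen
  nlinarith

theorem sq_integral_sq_sub_sq_le_measureReal_abs_ge_mul_integral_pow_four
    [IsProbabilityMeasure μ] {Y : Ω → ℝ} (hY : Measurable Y)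
    (hY2 : Integrable (fun ω ↦ Y ω ^ 2) μ) (hY4 : Integrable (fun ω ↦ Y ω ^ 4) μ) {s : ℝ}
    (hs : s ^ 2 ≤ ∫ ω, Y ω ^ 2 ∂μ) :
    (∫ ω, Y ω ^ 2 ∂μ - s ^ 2) ^ 2 ≤ μ.real {ω | s ≤ |Y ω|} * ∫ ω, Y ω ^ 4 ∂μ := by
  set A := {ω | s ≤ |Y ω|}
  have hA : MeasurableSet A := measurableSet_le measurable_const hY.abs
  have hsmall : ∫ ω in Aᶜ, Y ω ^ 2 ∂μ ≤ s ^ 2 := by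
    have hbound : ∀ ω ∈ Aᶜ, Y ω ^ 2 ≤ s ^ 2 := fun ω hω ↦
      sq_le_sq' (by linarith [neg_abs_le (Y ω), (not_le.1 hω : |Y ω| < s)])
        (by linarith [le_abs_self (Y ω), (not_le.1 hω : |Y ω| < s)])
    calc ∫ ω in Aᶜ, Y ω ^ 2 ∂μ ≤ ∫ _ in Aᶜ, s ^ 2 ∂μ :=
          setIntegral_mono_on hY2.integrableOn (integrableOn_const (measure_ne_top _ _))
            hA.compl hbound
      _ = μ.real Aᶜ * s ^ 2 := by rw [setIntegral_const, smul_eq_mul]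
      _ ≤ s ^ 2 := mul_le_of_le_one_left (sq_nonneg s) measureReal_le_one
  have hlarge : ∫ ω, Y ω ^ 2 ∂μ - s ^ 2 ≤ ∫ ω in A, Y ω ^ 2 ∂μ := by
    linarith [integral_add_compl hA hY2]
  have hsq : ∀ ω, (Y ω ^ 2) ^ 2 = Y ω ^ 4 := fun ω ↦ by ring
  have hcs := sq_setIntegral_le_measureReal_mul_setIntegral_sq (s := A) hY2.integrableOn
    (by simpa only [hsq] using hY4.integrableOn)
  simp only [hsq] at hcs
  calc (∫ ω, Y ω ^ 2 ∂μ - s ^ 2) ^ 2 ≤ (∫ ω in A, Y ω ^ 2 ∂μ) ^ 2 := by gcongr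
    _ ≤ μ.real A * ∫ ω in A, Y ω ^ 4 ∂μ := hcs
    _ ≤ μ.real A * ∫ ω, Y ω ^ 4 ∂μ :=
        mul_le_mul_of_nonneg_left
          (setIntegral_le_integral hY4 (.of_forall fun ω ↦ by positivity)) measureReal_nonneg

theorem sq_mul_measureReal_ge_le_measureReal_nonpos_mul_integral_sq [IsFiniteMeasure μ]
    {Y : Ω → ℝ} (hY : Measurable Y) (hY1 : Integrable Y μ)
    (hY2 : Integrable (fun ω ↦ Y ω ^ 2) μ) (hY0 : ∫ ω, Y ω ∂μ = 0) {s : ℝ} (hs : 0 < s) :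
    (s * μ.real {ω | s ≤ Y ω}) ^ 2 ≤ μ.real {ω | Y ω ≤ 0} * ∫ ω, Y ω ^ 2 ∂μ := by
  set B := {ω | Y ω ≤ 0}
  have hB : MeasurableSet B := measurableSet_le hY measurable_const
  have hupper : s * μ.real {ω | s ≤ Y ω} ≤ ∫ ω in Bᶜ, Y ω ∂μ := by
    calc s * μ.real {ω | s ≤ Y ω} ≤ ∫ ω in {ω | s ≤ Y ω}, Y ω ∂μ :=
          setIntegral_ge_of_const_le_real (measurableSet_le measurable_const hY)
            (measure_ne_top _ _) (fun ω hω ↦ hω) hY1.integrableOn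
      _ ≤ ∫ ω in Bᶜ, Y ω ∂μ := by
          refine setIntegral_mono_set hY1.integrableOn ?_ (Eventually.of_forall ?_)
          · filter_upwards [ae_restrict_mem hB.compl] with ω (hω : ¬ Y ω ≤ 0)
            exact (not_le.1 hω).le
          · exact fun ω (hω : s ≤ Y ω) ↦ show ¬ Y ω ≤ 0 from not_le.2 (hs.trans_le hω)
  have hbalance : ∫ ω in Bᶜ, Y ω ∂μ = ∫ ω in B, -Y ω ∂μ := by
    rw [integral_neg]; linarith [integral_add_compl hB hY1]
  calc (s * μ.real {ω | s ≤ Y ω}) ^ 2 ≤ (∫ ω in B, -Y ω ∂μ) ^ 2 := by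
        rw [← hbalance]; gcongr
    _ ≤ μ.real B * ∫ ω in B, (-Y ω) ^ 2 ∂μ :=
        sq_setIntegral_le_measureReal_mul_setIntegral_sq hY1.neg.integrableOn
          (by simpa only [neg_sq] using hY2.integrableOn)
    _ ≤ μ.real B * ∫ ω, Y ω ^ 2 ∂μ := by
        simp only [neg_sq]
        exact mul_le_mul_of_nonneg_left
          (setIntegral_le_integral hY2 (.of_forall fun ω ↦ by positivity)) measureReal_nonneg

theorem exists_measurableSet_le_abs_sub [IsFiniteMeasure μ] {Y : Ω → ℝ} (hY : Measurable Y)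
    (hY1 : Integrable Y μ) (hY2 : Integrable (fun ω ↦ Y ω ^ 2) μ) (hY0 : ∫ ω, Y ω ∂μ = 0)
    {s : ℝ} (hs : 0 < s) :
    ∃ Ω₁ Ω₂ : Set Ω, MeasurableSet Ω₁ ∧ MeasurableSet Ω₂ ∧
      μ.real {ω | s ≤ |Y ω|} / 2 ≤ μ.real Ω₁ ∧
      (s * (μ.real {ω | s ≤ |Y ω|} / 2)) ^ 2 ≤ μ.real Ω₂ * ∫ ω, Y ω ^ 2 ∂μ ∧
      ∀ ω₁ ∈ Ω₁, ∀ ω₂ ∈ Ω₂, s ≤ |Y ω₁ - Y ω₂| := by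
  set p := μ.real {ω | s ≤ |Y ω|}
  have hsplit : p ≤ μ.real {ω | s ≤ Y ω} + μ.real {ω | s ≤ -Y ω} :=
    (measureReal_mono (μ := μ) fun ω (hω : s ≤ |Y ω|) ↦ le_abs.1 hω).trans
      (measureReal_union_le _ _)
  rcases le_or_gt (p / 2) (μ.real {ω | s ≤ Y ω}) with hpos | hneg
  · refine ⟨{ω | s ≤ Y ω}, {ω | Y ω ≤ 0}, measurableSet_le measurable_const hY,
      measurableSet_le hY measurable_const, hpos, ?_,
      fun ω₁ (h₁ : s ≤ Y ω₁) ω₂ (h₂ : Y ω₂ ≤ 0) ↦ le_abs.2 (.inl (by linarith))⟩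
    calc (s * (p / 2)) ^ 2 ≤ (s * μ.real {ω | s ≤ Y ω}) ^ 2 := by gcongr
      _ ≤ _ := sq_mul_measureReal_ge_le_measureReal_nonpos_mul_integral_sq hY hY1 hY2 hY0 hs
  · have hneg' : p / 2 ≤ μ.real {ω | s ≤ -Y ω} := by linarith
    refine ⟨{ω | s ≤ -Y ω}, {ω | -Y ω ≤ 0}, measurableSet_le measurable_const hY.neg,
      measurableSet_le hY.neg measurable_const, hneg', ?_,
      fun ω₁ (h₁ : s ≤ -Y ω₁) ω₂ (h₂ : -Y ω₂ ≤ 0) ↦ le_abs.2 (.inr (by linarith))⟩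
    have key := sq_mul_measureReal_ge_le_measureReal_nonpos_mul_integral_sq
      (Y := fun ω ↦ -Y ω) hY.neg hY1.neg (by simpa only [neg_sq] using hY2)
      (by rw [integral_neg, hY0, neg_zero]) hs
    simp only [neg_sq] at key
    calc (s * (p / 2)) ^ 2 ≤ (s * μ.real {ω | s ≤ -Y ω}) ^ 2 := by gcongr
      _ ≤ _ := key


section Variance

variable [IsProbabilityMeasure μ] {X : Ω → ℝ}

theorem sq_variance_le_integral_pow_four (hX : AEStronglyMeasurable X μ)
    (hX2 : Integrable (fun ω ↦ X ω ^ 2) μ) (hX4 : Integrable (fun ω ↦ X ω ^ 4) μ) :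
    Var[X; μ] ^ 2 ≤ ∫ ω, X ω ^ 4 ∂μ := by
  have hsq : ∀ ω, (X ω ^ 2) ^ 2 = X ω ^ 4 := fun ω ↦ by ring
  calc Var[X; μ] ^ 2 ≤ (∫ ω, X ω ^ 2 ∂μ) ^ 2 := by
        gcongr
        · exact variance_nonneg X μ
        · exact variance_le_expectation_sq hX
    _ ≤ ∫ ω, X ω ^ 4 ∂μ := by
        simpa only [hsq] using
          pow_integral_le_integral_pow even_two hX2 (by simpa only [hsq] using hX4)

theorem sq_variance_sub_sq_le_measureReal_abs_sub_ge_mul_integral_pow_four (hXm : Measurable X)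
    (hX : Integrable X μ) (hX2 : Integrable (fun ω ↦ X ω ^ 2) μ)
    (hX4 : Integrable (fun ω ↦ X ω ^ 4) μ) {s : ℝ} (hs : s ^ 2 ≤ Var[X; μ]) :
    (Var[X; μ] - s ^ 2) ^ 2 ≤ μ.real {ω | s ≤ |X ω - μ[X]|} * (16 * ∫ ω, X ω ^ 4 ∂μ) := by
  rw [variance_eq_integral hXm.aemeasurable] at hs ⊢
  calc _ ≤ μ.real {ω | s ≤ |X ω - μ[X]|} * ∫ ω, (X ω - μ[X]) ^ 4 ∂μ :=
        sq_integral_sq_sub_sq_le_measureReal_abs_ge_mul_integral_pow_four (hXm.sub_const _)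
          (hX.sub_const_sq hX2 _) (hX4.sub_const_pow_four hX.aestronglyMeasurable _) hs
    _ ≤ _ := by gcongr; exact integral_sub_integral_pow_four_le hX hX4

theorem exists_measurableSet_le_abs_sub_of_variance (hXm : Measurable X) (hX : Integrable X μ)
    (hX2 : Integrable (fun ω ↦ X ω ^ 2) μ) {s : ℝ} (hs : 0 < s) :
    ∃ Ω₁ Ω₂ : Set Ω, MeasurableSet Ω₁ ∧ MeasurableSet Ω₂ ∧
      μ.real {ω | s ≤ |X ω - μ[X]|} / 2 ≤ μ.real Ω₁ ∧
      (s * (μ.real {ω | s ≤ |X ω - μ[X]|} / 2)) ^ 2 ≤ μ.real Ω₂ * Var[X; μ] ∧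
      ∀ ω₁ ∈ Ω₁, ∀ ω₂ ∈ Ω₂, s ≤ |X ω₁ - X ω₂| := by
  obtain ⟨Ω₁, Ω₂, h₁, h₂, hP₁, hP₂, hsep⟩ := exists_measurableSet_le_abs_sub
    (Y := fun ω ↦ X ω - μ[X]) (hXm.sub_const _) (hX.sub (integrable_const _))
    (hX.sub_const_sq hX2 _) (by simp [integral_sub hX (integrable_const _)]) hs
  refine ⟨Ω₁, Ω₂, h₁, h₂, hP₁, ?_, fun ω₁ hω₁ ω₂ hω₂ ↦ ?_⟩
  · rwa [variance_eq_integral hXm.aemeasurable]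
  · simpa using hsep ω₁ hω₁ ω₂ hω₂

end Variance

end Moments

/-- Anticoncentration from variance and fourth-moment bounds: if `Var(X) ≥ c₁ > 0`
and `E[X⁴] ≤ c₂`, there are sets `Ω₁, Ω₂` of probability at least `c₃ = c₃(c₁,c₂) > 0`
on which the values of `X` differ by at least `√c₁/2`. -/
theorem anticoncentration_of_variance (c₁ c₂ : ℝ) (hc₁ : 0 < c₁) :
    ∃ c₃ : ℝ, 0 < c₃ ∧
      ∀ (Ω : Type) [MeasurableSpace Ω] (P : Measure Ω) [IsProbabilityMeasure P]
        (X : Ω → ℝ),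
        Measurable X →
        Integrable X P → Integrable (fun ω => X ω ^ 2) P →
        Integrable (fun ω => X ω ^ 4) P →
        c₁ ≤ variance X P → (∫ ω, X ω ^ 4 ∂P) ≤ c₂ →
        ∃ Ω₁ Ω₂ : Set Ω, MeasurableSet Ω₁ ∧ MeasurableSet Ω₂ ∧
          ENNReal.ofReal c₃ ≤ P Ω₁ ∧ ENNReal.ofReal c₃ ≤ P Ω₂ ∧
          ∀ ω₁ ∈ Ω₁, ∀ ω₂ ∈ Ω₂, Real.sqrt c₁ / 2 ≤ |X ω₁ - X ω₂| := by
  -- `c₁² ≤ Var X ² ≤ E X⁴ ≤ c₂` whenever some `X` qualifies; the `max` only keeps `d > 0`.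
  set d := max c₂ (c₁ ^ 2)
  have hd : 0 < d := lt_max_of_lt_right (by positivity)
  set s := Real.sqrt c₁ / 2
  have hs2 : s ^ 2 = c₁ / 4 := by rw [div_pow, Real.sq_sqrt hc₁.le]; norm_num
  set q := (3 * c₁ / 4) ^ 2 / (16 * d)
  refine ⟨min (q / 2) ((s * (q / 2)) ^ 2 / Real.sqrt d), by positivity, ?_⟩
  intro Ω _ P _ X hXm hXi hX2 hX4 hvar hc₂
  have hX4d : ∫ ω, X ω ^ 4 ∂P ≤ d := hc₂.trans (le_max_left _ _)
  have hvar_le : Var[X; P] ≤ Real.sqrt d := Real.le_sqrt_of_sq_le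
    ((sq_variance_le_integral_pow_four hXm.aestronglyMeasurable hX2 hX4).trans hX4d)
  set A := {ω | s ≤ |X ω - P[X]|}
  have htail : q ≤ P.real A := by
    rw [div_le_iff₀ (by positivity)]
    calc (3 * c₁ / 4) ^ 2 ≤ (Var[X; P] - s ^ 2) ^ 2 := by gcongr; linarith
      _ ≤ P.real A * (16 * ∫ ω, X ω ^ 4 ∂P) :=
        sq_variance_sub_sq_le_measureReal_abs_sub_ge_mul_integral_pow_four hXm hXi hX2 hX4
          (by linarith)
      _ ≤ P.real A * (16 * d) := by gcongr
  obtain ⟨Ω₁, Ω₂, h₁, h₂, hP₁, hP₂, hsep⟩ :=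
    exists_measurableSet_le_abs_sub_of_variance hXm hXi hX2 (s := s) (by positivity)
  refine ⟨Ω₁, Ω₂, h₁, h₂, ?_, ?_, hsep⟩
  all_goals rw [ENNReal.ofReal_le_iff_le_toReal (measure_ne_top _ _), ← measureReal_def]
  · exact (min_le_left _ _).trans (by linarith)
  · refine (min_le_right _ _).trans ((div_le_iff₀ (by positivity)).2 ?_)
    calc (s * (q / 2)) ^ 2 ≤ (s * (P.real A / 2)) ^ 2 := by gcongr
      _ ≤ P.real Ω₂ * Var[X; P] := hP₂
      _ ≤ P.real Ω₂ * Real.sqrt d := by gcongr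
end

section
/- Let X be a random variable with Var(X) ≥ c₁ > 0 and E[e^{|X|}] ≤ c₂ < ∞. Then there exists a constant c₃ > 0 depending only on c₁ and c₂, and a measurable set Ω' with P(Ω') ≥ c₃, such that for every ω ∈ Ω': |X(ω) − ln(E[e^X])| ≥ √c₁/4. -/
/-!
Center `X` at `m = log E[e^X]`. Jensen's inequality and `log x ≤ x` give `|m| ≤ E[e^{|X|}]`, so
`Y = X - m` keeps an exponential moment, hence a bounded fourth moment, while
`E[Y²] ≥ Var X ≥ c₁`. A Paley–Zygmund argument for `Y²` then bounds `P(|Y| ≥ t)` from below: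
on `{|Y| < t}` the second moment is at most `t²`, and on `{|Y| ≥ t}` the truncation
`y² ≤ R + y⁴ / R` bounds it by `R · P(|Y| ≥ t) + E[Y⁴] / R`.
-/

open MeasureTheory ProbabilityTheory Real

section

variable {Ω : Type*} [MeasurableSpace Ω] {P : Measure Ω}

lemma abs_pow_le_factorial_mul_exp_abs (x : ℝ) (n : ℕ) : |x| ^ n ≤ n.factorial * exp |x| := by
  have := Real.pow_div_factorial_le_exp _ (abs_nonneg x) n
  rwa [div_le_iff₀ (by positivity), mul_comm] at this

lemma integrable_pow_of_integrable_exp_abs {Y : Ω → ℝ} (hY : AEStronglyMeasurable Y P)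
    (hexp : Integrable (fun ω => exp |Y ω|) P) (n : ℕ) : Integrable (fun ω => Y ω ^ n) P :=
  (hexp.const_mul n.factorial).mono' (hY.pow n) <| .of_forall fun ω => by
    simpa only [norm_pow, Real.norm_eq_abs] using abs_pow_le_factorial_mul_exp_abs (Y ω) n

lemma integral_pow_le_factorial_mul_integral_exp_abs {Y : Ω → ℝ} (hY : AEStronglyMeasurable Y P)
    (hexp : Integrable (fun ω => exp |Y ω|) P) (n : ℕ) :
    ∫ ω, Y ω ^ n ∂P ≤ n.factorial * ∫ ω, exp |Y ω| ∂P := by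
  rw [← integral_const_mul]
  refine integral_mono (integrable_pow_of_integrable_exp_abs hY hexp n)
    (hexp.const_mul _) fun ω => ?_
  exact (le_abs_self _).trans ((abs_pow _ _).trans_le (abs_pow_le_factorial_mul_exp_abs _ n))

lemma integrable_exp_abs_sub_const {X : Ω → ℝ} (hX : AEStronglyMeasurable X P)
    (hexp : Integrable (fun ω => exp |X ω|) P) (a : ℝ) :
    Integrable (fun ω => exp |X ω - a|) P :=
  (hexp.const_mul (exp |a|)).mono' (by fun_prop) <| .of_forall fun ω => by
    rw [Real.norm_eq_abs, abs_of_pos (exp_pos _), ← exp_add, exp_le_exp]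
    linarith [abs_sub (X ω) a]

lemma integral_exp_abs_sub_const_le {X : Ω → ℝ} (hX : AEStronglyMeasurable X P)
    (hexp : Integrable (fun ω => exp |X ω|) P) (a : ℝ) :
    ∫ ω, exp |X ω - a| ∂P ≤ exp |a| * ∫ ω, exp |X ω| ∂P := by
  rw [← integral_const_mul]
  refine integral_mono (integrable_exp_abs_sub_const hX hexp a) (hexp.const_mul _) fun ω => ?_
  simp only [← exp_add, exp_le_exp]
  linarith [abs_sub (X ω) a]

lemma abs_log_integral_exp_le [IsProbabilityMeasure P] {X : Ω → ℝ} (hX : Integrable X P)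
    (hexp : Integrable (fun ω => exp (X ω)) P) (hexp_abs : Integrable (fun ω => exp |X ω|) P) :
    |log (∫ ω, exp (X ω) ∂P)| ≤ ∫ ω, exp |X ω| ∂P := by
  have jensen : exp (∫ ω, X ω ∂P) ≤ ∫ ω, exp (X ω) ∂P := by
    simpa using convexOn_exp.map_integral_le continuous_exp.continuousOn isClosed_univ
      (.of_forall fun _ => Set.mem_univ _) hX hexp
  have hpos : 0 < ∫ ω, exp (X ω) ∂P := (exp_pos _).trans_le jensen
  have lower : -∫ ω, exp |X ω| ∂P ≤ ∫ ω, X ω ∂P := by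
    rw [← integral_neg]
    exact integral_mono hexp_abs.neg hX fun ω => by
      simp only [neg_le]
      linarith [neg_abs_le (X ω), add_one_le_exp |X ω|]
  have upper : ∫ ω, exp (X ω) ∂P ≤ ∫ ω, exp |X ω| ∂P :=
    integral_mono hexp hexp_abs fun ω => exp_le_exp.2 (le_abs_self _)
  rw [abs_le]
  constructor
  · linarith [(le_log_iff_exp_le hpos).2 jensen]
  · linarith [log_le_self hpos.le]

lemma setIntegral_sq_le [IsFiniteMeasure P] {Y : Ω → ℝ} (hY2 : Integrable (fun ω => Y ω ^ 2) P)
    (hY4 : Integrable (fun ω => Y ω ^ 4) P) (S : Set Ω) {R : ℝ} (hR : 0 < R) :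
    ∫ ω in S, Y ω ^ 2 ∂P ≤ R * P.real S + (∫ ω, Y ω ^ 4 ∂P) / R := by
  have pointwise (y : ℝ) : y ^ 2 ≤ R + y ^ 4 / R := by
    rw [← sub_nonneg]
    have : R + y ^ 4 / R - y ^ 2 = ((R - y ^ 2) ^ 2 + R * y ^ 2) / R := by field_simp; ring
    rw [this]; positivity
  have hbound : Integrable (fun ω => R + Y ω ^ 4 / R) P :=
    (integrable_const R).add (hY4.div_const R)
  calc ∫ ω in S, Y ω ^ 2 ∂P ≤ ∫ ω in S, (R + Y ω ^ 4 / R) ∂P :=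
        setIntegral_mono hY2.integrableOn hbound.integrableOn fun ω => pointwise (Y ω)
    _ = R * P.real S + (∫ ω in S, Y ω ^ 4 ∂P) / R := by
        rw [integral_add (integrable_const R) (hY4.div_const R).integrableOn, setIntegral_const,
          integral_div, smul_eq_mul, mul_comm]
    _ ≤ R * P.real S + (∫ ω, Y ω ^ 4 ∂P) / R := by
        gcongr _ + ?_ / _
        exact setIntegral_le_integral hY4 (.of_forall fun ω => by positivity)

lemma setIntegral_compl_sq_le [IsProbabilityMeasure P] {Y : Ω → ℝ}
    (hY2 : Integrable (fun ω => Y ω ^ 2) P) (hY : Measurable Y) (t : ℝ) :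
    ∫ ω in {ω | t ≤ |Y ω|}ᶜ, Y ω ^ 2 ∂P ≤ t ^ 2 := by
  have hS : MeasurableSet {ω | t ≤ |Y ω|}ᶜ := (measurableSet_le measurable_const hY.abs).compl
  calc ∫ ω in {ω | t ≤ |Y ω|}ᶜ, Y ω ^ 2 ∂P ≤ ∫ _ in {ω | t ≤ |Y ω|}ᶜ, t ^ 2 ∂P := by
        refine setIntegral_mono_on hY2.integrableOn (integrableOn_const (measure_ne_top _ _)) hS
          fun ω hω => ?_
        simp only [Set.mem_compl_iff, Set.mem_ofPred_eq, not_le] at hω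
        rw [← sq_abs]
        exact pow_le_pow_left₀ (abs_nonneg _) hω.le 2
    _ = P.real {ω | t ≤ |Y ω|}ᶜ * t ^ 2 := by rw [setIntegral_const, smul_eq_mul]
    _ ≤ t ^ 2 := mul_le_of_le_one_left (sq_nonneg t) measureReal_le_one

theorem le_measureReal_le_abs_of_integral_pow_four_le [IsProbabilityMeasure P] {Y : Ω → ℝ}
    (hY : Measurable Y) (hY2 : Integrable (fun ω => Y ω ^ 2) P)
    (hY4 : Integrable (fun ω => Y ω ^ 4) P) {t v M : ℝ} (htv : t ^ 2 < v)
    (hv : v ≤ ∫ ω, Y ω ^ 2 ∂P) (hM : ∫ ω, Y ω ^ 4 ∂P ≤ M) :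
    (v - t ^ 2) ^ 2 / (4 * M) ≤ P.real {ω | t ≤ |Y ω|} := by
  rcases le_or_gt M 0 with hM0 | hM0
  · exact (div_nonpos_of_nonneg_of_nonpos (sq_nonneg _) (by linarith)).trans measureReal_nonneg
  set S := {ω | t ≤ |Y ω|}
  have hS : MeasurableSet S := measurableSet_le measurable_const hY.abs
  set δ := v - t ^ 2
  have hδ : 0 < δ := sub_pos.2 htv
  -- the truncation level balancing the two terms of `setIntegral_sq_le`
  set R := 2 * M / δ
  have hR : 0 < R := by positivity
  have hsplit := integral_add_compl hS hY2
  have hS_int := setIntegral_sq_le hY2 hY4 S hR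
  have hSc_int := setIntegral_compl_sq_le hY2 hY t
  have hMR : (∫ ω, Y ω ^ 4 ∂P) / R ≤ δ / 2 := by
    rw [div_le_iff₀ hR, show δ / 2 * R = M by simp only [R]; field_simp]; exact hM
  have key : δ ^ 2 ≤ 4 * M * P.real S := by
    have : δ / 2 ≤ R * P.real S := by linarith
    rw [show R * P.real S = 2 * M * P.real S / δ by ring, le_div_iff₀ hδ] at this
    nlinarith
  rwa [div_le_iff₀ (by positivity), mul_comm]

end

/-- Anticoncentration away from the log-moment-generating value: if `Var(X) ≥ c₁ > 0`
and `E[e^{|X|}] ≤ c₂`, there is a set `Ω'` of probability at least `c₃ = c₃(c₁,c₂) > 0`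
on which `|X - ln E[e^X]| ≥ √c₁/4`. -/
theorem anticoncentration_from_log_mgf (c₁ c₂ : ℝ) (hc₁ : 0 < c₁) :
    ∃ c₃ : ℝ, 0 < c₃ ∧
      ∀ (Ω : Type) [MeasurableSpace Ω] (P : Measure Ω) [IsProbabilityMeasure P]
        (X : Ω → ℝ),
        Measurable X →
        Integrable X P →
        Integrable (fun ω => Real.exp |X ω|) P →
        Integrable (fun ω => Real.exp (X ω)) P →
        c₁ ≤ variance X P →
        (∫ ω, Real.exp |X ω| ∂P) ≤ c₂ →
        ∃ Ω' : Set Ω, MeasurableSet Ω' ∧ ENNReal.ofReal c₃ ≤ P Ω' ∧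
          ∀ ω ∈ Ω',
            Real.sqrt c₁ / 4 ≤ |X ω - Real.log (∫ x, Real.exp (X x) ∂P)| := by
  set c := max c₂ 1
  have hc : 0 < c := one_pos.trans_le (le_max_right _ _)
  set M := (4 : ℕ).factorial * (exp c * c)
  refine ⟨(15 * c₁ / 16) ^ 2 / (4 * M), by positivity, ?_⟩
  intro Ω _ P _ X hXm hXi hXabs hXexp hvar hc₂
  set m := log (∫ x, exp (X x) ∂P)
  have hc₂c : ∫ ω, exp |X ω| ∂P ≤ c := hc₂.trans (le_max_left _ _)
  have hm : |m| ≤ c := (abs_log_integral_exp_le hXi hXexp hXabs).trans hc₂c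
  set Y := fun ω => X ω - m
  have hY : Measurable Y := hXm.sub_const m
  have hYexp := integrable_exp_abs_sub_const hXm.aestronglyMeasurable hXabs m
  have hY2 : c₁ ≤ ∫ ω, Y ω ^ 2 ∂P := by
    rw [← variance_sub_const hXm.aestronglyMeasurable m] at hvar
    exact hvar.trans (variance_le_expectation_sq hY.aestronglyMeasurable)
  have hY4 : ∫ ω, Y ω ^ 4 ∂P ≤ M := calc
    _ ≤ (4 : ℕ).factorial * ∫ ω, exp |Y ω| ∂P :=
      integral_pow_le_factorial_mul_integral_exp_abs hY.aestronglyMeasurable hYexp 4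
    _ ≤ (4 : ℕ).factorial * (exp |m| * ∫ ω, exp |X ω| ∂P) := by
      gcongr; exact integral_exp_abs_sub_const_le hXm.aestronglyMeasurable hXabs m
    _ ≤ (4 : ℕ).factorial * (exp c * c) := by gcongr
  have hthreshold : (√c₁ / 4) ^ 2 = c₁ / 16 := by rw [div_pow, sq_sqrt hc₁.le]; norm_num
  have hbound := le_measureReal_le_abs_of_integral_pow_four_le hY
    (integrable_pow_of_integrable_exp_abs hY.aestronglyMeasurable hYexp 2)
    (integrable_pow_of_integrable_exp_abs hY.aestronglyMeasurable hYexp 4)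
    (by rw [hthreshold]; linarith) hY2 hY4
  refine ⟨{ω | √c₁ / 4 ≤ |Y ω|}, measurableSet_le measurable_const hY.abs, ?_, fun ω hω => hω⟩
  rw [ENNReal.ofReal_le_iff_le_toReal (measure_ne_top _ _), ← measureReal_def]
  convert hbound using 3
  rw [hthreshold]; ring
end

section
/- There exists an absolute constant C > 0 such that the following holds. Let V be a random variable taking values in the nonnegative integers, let B ≥ 1 and t > 0 be real numbers with S := (tB)^{16/15} ≥ 1, and suppose that for every integer k ≥ 1: E[binom(V, k)] ≤ (B / k^{15/16})^k. Then E[(1 + t)^V] ≤ C·(1 + S)·exp(S). -/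
/-!
Expanding `(1 + t) ^ V = ∑ₖ binom(V, k) tᵏ` and exchanging the two sums, `E[(1 + t) ^ V]` is at
most `∑ₖ tᵏ E[binom(V, k)] ≤ ∑ₖ ((S / k) ^ (15/16)) ^ k`. For `k ≤ S` the summand is at most
`(S / k) ^ k ≤ S ^ k / k!`, and these sum to at most `exp S`; for `S < k ≤ 2S` it is at most `1`;
for `k > 2S` it is at most `(3/4) ^ k`. Altogether `E[(1 + t) ^ V] ≤ exp S + 2S + 6`.
-/

open Finset Real
open scoped ENNReal Nat

noncomputable def binomialMoment (p : ℕ → ℝ≥0∞) (k : ℕ) : ℝ≥0∞ :=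
  ∑' n, p n * (n.choose k : ℝ≥0∞)

theorem ENNReal.ofReal_one_add_pow {t : ℝ} (ht : 0 ≤ t) (n : ℕ) :
    ENNReal.ofReal ((1 + t) ^ n) = ∑' k, (n.choose k : ℝ≥0∞) * ENNReal.ofReal t ^ k := by
  rw [ENNReal.ofReal_pow (by positivity), ENNReal.ofReal_add zero_le_one ht, ENNReal.ofReal_one,
    add_comm, add_pow, tsum_eq_sum (s := range (n + 1))]
  · simp only [one_pow, mul_one, mul_comm]
  · intro k hk
    rw [Nat.choose_eq_zero_of_lt (by simpa using hk)]
    simp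

theorem tsum_mul_ofReal_one_add_pow_eq_tsum_binomialMoment (p : ℕ → ℝ≥0∞) {t : ℝ} (ht : 0 ≤ t) :
    ∑' n, p n * ENNReal.ofReal ((1 + t) ^ n) =
      ∑' k, ENNReal.ofReal t ^ k * binomialMoment p k := by
  simp_rw [binomialMoment, ENNReal.ofReal_one_add_pow ht, ← ENNReal.tsum_mul_left]
  rw [ENNReal.tsum_comm]
  exact tsum_congr fun k ↦ tsum_congr fun n ↦ by ring

theorem rpow_pow_le_pow_div_factorial_add_one {S a : ℝ} (hS : 0 ≤ S) (ha₀ : 0 ≤ a) (ha₁ : a ≤ 1)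
    {k : ℕ} (hk : 0 < k) : ((S / k) ^ a) ^ k ≤ S ^ k / k ! + 1 := by
  rcases le_or_gt 1 (S / k) with h | h
  · calc ((S / k) ^ a) ^ k ≤ (S / k) ^ k :=
          pow_le_pow_left₀ (by positivity) (rpow_le_self_of_one_le h ha₁) k
      _ = S ^ k / (k : ℝ) ^ k := div_pow ..
      _ ≤ S ^ k / k ! := div_le_div_of_nonneg_left (by positivity) (by positivity)
          (by exact_mod_cast Nat.factorial_le_pow k)
      _ ≤ S ^ k / k ! + 1 := le_add_of_nonneg_right zero_le_one
  · calc ((S / k) ^ a) ^ k ≤ 1 :=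
          pow_le_one₀ (by positivity) (rpow_le_one (by positivity) h.le ha₀)
      _ ≤ S ^ k / k ! + 1 := le_add_of_nonneg_left (by positivity)

theorem rpow_pow_le_three_quarters_pow {S a : ℝ} (hS : 0 ≤ S) (ha : 1 / 2 ≤ a) {k : ℕ}
    (hk : 2 * S < k) : ((S / k) ^ a) ^ k ≤ (3 / 4) ^ k := by
  have hk₀ : (0 : ℝ) < k := by linarith
  refine pow_le_pow_left₀ (by positivity) ?_ k
  calc (S / k) ^ a ≤ (1 / 2) ^ a :=
        rpow_le_rpow (by positivity) ((div_le_iff₀ hk₀).2 (by linarith)) (by linarith)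
    _ ≤ (1 / 2) ^ (1 / 2 : ℝ) := rpow_le_rpow_of_exponent_ge (by norm_num) (by norm_num) ha
    _ ≤ 3 / 4 := by
        rw [← sqrt_eq_rpow, sqrt_le_iff]
        norm_num

theorem ENNReal.tsum_ite_le_eq_add_one (N : ℕ) :
    ∑' k : ℕ, (if k ≤ N then (1 : ℝ≥0∞) else 0) = N + 1 := by
  rw [tsum_eq_sum (s := range (N + 1)),
    sum_ite_of_true fun k hk ↦ Nat.lt_succ_iff.1 (mem_range.1 hk)]
  · simp
  · intro k hk
    simp_all

theorem ENNReal.tsum_ofReal_pow_div_factorial {x : ℝ} (hx : 0 ≤ x) :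
    ∑' k : ℕ, ENNReal.ofReal (x ^ k / k !) = ENNReal.ofReal (exp x) := by
  have h := exp_eq_exp_ℝ ▸ NormedSpace.expSeries_div_hasSum_exp x
  rw [← ENNReal.ofReal_tsum_of_nonneg (fun k ↦ by positivity) h.summable, h.tsum_eq]

theorem ENNReal.tsum_ofReal_three_quarters_pow :
    ∑' k : ℕ, ENNReal.ofReal ((3 / 4 : ℝ) ^ k) = 4 := by
  rw [← ENNReal.ofReal_tsum_of_nonneg (fun k ↦ by positivity)
      (summable_geometric_of_lt_one (by norm_num) (by norm_num)),
    tsum_geometric_of_lt_one (by norm_num) (by norm_num)]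
  norm_num

section BinomialMomentBound

variable {p : ℕ → ℝ≥0∞} {a B t S : ℝ}

theorem ofReal_pow_mul_binomialMoment_le (ht : 0 ≤ t) (hS : 0 ≤ S) (htB : t * B = S ^ a)
    {k : ℕ} (hmom : binomialMoment p k ≤ ENNReal.ofReal ((B / (k : ℝ) ^ a) ^ k)) :
    ENNReal.ofReal t ^ k * binomialMoment p k ≤ ENNReal.ofReal (((S / k) ^ a) ^ k) :=
  calc ENNReal.ofReal t ^ k * binomialMoment p k
      ≤ ENNReal.ofReal t ^ k * ENNReal.ofReal ((B / (k : ℝ) ^ a) ^ k) := by gcongr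
    _ = ENNReal.ofReal (((S / k) ^ a) ^ k) := by
        rw [← ENNReal.ofReal_pow ht, ← ENNReal.ofReal_mul (by positivity), ← mul_pow,
          div_rpow hS k.cast_nonneg, ← htB, mul_div_assoc]

/-- The three summands account for `k ≤ S`, `S < k ≤ 2S` and `2S < k` respectively. -/
theorem ofReal_pow_mul_binomialMoment_le_add (hp : ∑' n, p n ≤ 1) (ha₀ : 1 / 2 ≤ a)
    (ha₁ : a ≤ 1) (ht : 0 ≤ t) (hS : 0 ≤ S) (htB : t * B = S ^ a)
    (hmom : ∀ k : ℕ, 1 ≤ k → binomialMoment p k ≤ ENNReal.ofReal ((B / (k : ℝ) ^ a) ^ k))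
    (k : ℕ) :
    ENNReal.ofReal t ^ k * binomialMoment p k ≤
      ENNReal.ofReal (S ^ k / k !) + (if k ≤ ⌈2 * S⌉₊ then 1 else 0) +
        ENNReal.ofReal ((3 / 4) ^ k) := by
  rcases k.eq_zero_or_pos with rfl | hk
  · simpa [binomialMoment] using hp.trans (by norm_num)
  refine (ofReal_pow_mul_binomialMoment_le ht hS htB (hmom k hk)).trans ?_
  split_ifs with hkN
  · calc ENNReal.ofReal (((S / k) ^ a) ^ k)
        ≤ ENNReal.ofReal (S ^ k / k ! + 1) := ENNReal.ofReal_le_ofReal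
          (rpow_pow_le_pow_div_factorial_add_one hS (by linarith) ha₁ hk)
      _ = ENNReal.ofReal (S ^ k / k !) + 1 := by
          rw [ENNReal.ofReal_add (by positivity) zero_le_one, ENNReal.ofReal_one]
      _ ≤ _ := le_self_add
  · have h2S : 2 * S < k := (Nat.le_ceil _).trans_lt (by exact_mod_cast not_le.1 hkN)
    exact (ENNReal.ofReal_le_ofReal (rpow_pow_le_three_quarters_pow hS ha₀ h2S)).trans le_add_self

theorem tsum_mul_ofReal_one_add_pow_le (hp : ∑' n, p n ≤ 1) (ha₀ : 1 / 2 ≤ a) (ha₁ : a ≤ 1)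
    (ht : 0 ≤ t) (hS : 0 ≤ S) (htB : t * B = S ^ a)
    (hmom : ∀ k : ℕ, 1 ≤ k → binomialMoment p k ≤ ENNReal.ofReal ((B / (k : ℝ) ^ a) ^ k)) :
    ∑' n, p n * ENNReal.ofReal ((1 + t) ^ n) ≤ ENNReal.ofReal (exp S + (2 * S + 2) + 4) :=
  calc ∑' n, p n * ENNReal.ofReal ((1 + t) ^ n)
      = ∑' k, ENNReal.ofReal t ^ k * binomialMoment p k :=
        tsum_mul_ofReal_one_add_pow_eq_tsum_binomialMoment p ht
    _ ≤ ∑' k : ℕ, (ENNReal.ofReal (S ^ k / k !) + (if k ≤ ⌈2 * S⌉₊ then 1 else 0) +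
          ENNReal.ofReal ((3 / 4) ^ k)) :=
        ENNReal.tsum_le_tsum (ofReal_pow_mul_binomialMoment_le_add hp ha₀ ha₁ ht hS htB hmom)
    _ = ENNReal.ofReal (exp S) + (⌈2 * S⌉₊ + 1) + 4 := by
        rw [ENNReal.tsum_add, ENNReal.tsum_add, ENNReal.tsum_ofReal_pow_div_factorial hS,
          ENNReal.tsum_ite_le_eq_add_one, ENNReal.tsum_ofReal_three_quarters_pow]
    _ ≤ ENNReal.ofReal (exp S) + ENNReal.ofReal (2 * S + 2) + ENNReal.ofReal 4 := by
        gcongr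
        · rw [← Nat.cast_add_one, ← ENNReal.ofReal_natCast]
          refine ENNReal.ofReal_le_ofReal ?_
          push_cast
          linarith [Nat.ceil_lt_add_one (by positivity : 0 ≤ 2 * S)]
        · norm_num
    _ = ENNReal.ofReal (exp S + (2 * S + 2) + 4) := by
        rw [ENNReal.ofReal_add (by positivity) (by norm_num : (0 : ℝ) ≤ 4),
          ENNReal.ofReal_add (exp_pos S).le (by positivity)]

end BinomialMomentBound

/-- If a nonnegative-integer random variable `V` (with distribution `p`) has binomial
moments `E[binom(V,k)] ≤ (B/k^{15/16})^k`, then with `S = (tB)^{16/15} ≥ 1` one has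
`E[(1+t)^V] ≤ C·(1+S)·exp(S)` for an absolute constant `C > 0`. -/
theorem exponential_moment_from_binomial_moments : ∃ C : ℝ, 0 < C ∧
    ∀ (p : ℕ → ENNReal) (B t : ℝ),
      (∑' n, p n) = 1 → 1 ≤ B → 0 < t →
      1 ≤ (t * B) ^ ((16 : ℝ) / 15) →
      (∀ k : ℕ, 1 ≤ k →
        (∑' n, p n * (n.choose k : ENNReal)) ≤
          ENNReal.ofReal ((B / (k : ℝ) ^ ((15 : ℝ) / 16)) ^ k)) →
      (∑' n, p n * ENNReal.ofReal ((1 + t) ^ n)) ≤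
        ENNReal.ofReal (C * (1 + (t * B) ^ ((16 : ℝ) / 15)) *
          Real.exp ((t * B) ^ ((16 : ℝ) / 15))) := by
  refine ⟨12, by norm_num, fun p B t hp hB ht _ hmom ↦ ?_⟩
  set S := (t * B) ^ ((16 : ℝ) / 15)
  have hS : 0 ≤ S := by positivity
  have htB : t * B = S ^ ((15 : ℝ) / 16) := by
    rw [← rpow_mul (mul_pos ht (one_pos.trans_le hB)).le]
    norm_num
  refine (tsum_mul_ofReal_one_add_pow_le hp.le (by norm_num) (by norm_num) ht.le hS htB
    hmom).trans (ENNReal.ofReal_le_ofReal ?_)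
  nlinarith [one_le_exp hS]
end
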